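/- arXiv:1301.2661 — 4 statements merged into one kernel-verified Lean document; each statement's English description precedes it below -/
import Mathlib

section
/- Let A be an arena over a countable vertex set with Büchi set F ⊆ V. Then W_E(FinBüchi(F)) = μX.(⋃_{N∈ℕ} μY.νZ.Attr^E_N((F ∪ Y ∪ X) ∩ Pre(Z))), where μX denotes the least fixpoint (with respect to set inclusion) of the monotone map sending X to ⋃_{N∈ℕ} μY.νZ.Attr^E_N((F ∪ Y ∪ X) ∩ Pre(Z)), μY the least fixpoint of the inner map in Y, and νZ the greatest fixpoint of the map Z ↦ Attr^E_N((F ∪ Y ∪ X) ∩ Pre(Z)). -/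
open Filter Set

/-- An arena: a directed graph on vertex set `V` with no dead-ends, together with
the set `eve` of vertices controlled by Eve (the rest are controlled by Adam). -/
structure Arena (V : Type) where
  eve : Set V
  edge : V → V → Prop
  succ : ∀ v, ∃ w, edge v w

namespace GameDefs

variable {V : Type}

/-- An infinite play: an infinite path in the arena. -/
def IsPlay (A : Arena V) (π : ℕ → V) : Prop := ∀ k, A.edge (π k) (π (k + 1))

/-- The (strict) history of a play before time `k`. -/
def hist (π : ℕ → V) (k : ℕ) : List V := (List.range k).map π

/-- A general (history-dependent) strategy for Eve. -/
structure EveStrategy (A : Arena V) where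
  move : List V → V → V
  legal : ∀ h v, v ∈ A.eve → A.edge v (move h v)

def EveConsistent (A : Arena V) (σ : EveStrategy A) (π : ℕ → V) : Prop :=
  ∀ k, π k ∈ A.eve → π (k + 1) = σ.move (hist π k) (π k)

def EveWinsFrom (A : Arena V) (σ : EveStrategy A) (Ω : Set (ℕ → V)) (v : V) : Prop :=
  ∀ π, IsPlay A π → π 0 = v → EveConsistent A σ π → π ∈ Ω

/-- Eve's winning region. -/
def WE (A : Arena V) (Ω : Set (ℕ → V)) : Set V :=
  {v | ∃ σ : EveStrategy A, EveWinsFrom A σ Ω v}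

/-- A general (history-dependent) strategy for Adam. -/
structure AdamStrategy (A : Arena V) where
  move : List V → V → V
  legal : ∀ h v, v ∉ A.eve → A.edge v (move h v)

def AdamConsistent (A : Arena V) (τ : AdamStrategy A) (π : ℕ → V) : Prop :=
  ∀ k, π k ∉ A.eve → π (k + 1) = τ.move (hist π k) (π k)

def AdamWinsFrom (A : Arena V) (τ : AdamStrategy A) (Ω : Set (ℕ → V)) (v : V) : Prop :=
  ∀ π, IsPlay A π → π 0 = v → AdamConsistent A τ π → π ∉ Ω

/-- Adam's winning region. -/
def WA (A : Arena V) (Ω : Set (ℕ → V)) : Set V :=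
  {v | ∃ τ : AdamStrategy A, AdamWinsFrom A τ Ω v}

/-- A positional (memoryless) strategy for Eve. -/
structure PosStrategy (A : Arena V) where
  move : V → V
  legal : ∀ v, v ∈ A.eve → A.edge v (move v)

def PosConsistent (A : Arena V) (σ : PosStrategy A) (π : ℕ → V) : Prop :=
  ∀ k, π k ∈ A.eve → π (k + 1) = σ.move (π k)

def PosWinsFrom (A : Arena V) (σ : PosStrategy A) (Ω : Set (ℕ → V)) (v : V) : Prop :=
  ∀ π, IsPlay A π → π 0 = v → PosConsistent A σ π → π ∈ Ω

/-- A memory structure: memory states, initial state, and update function on edges. -/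
structure Memory (V : Type) where
  M : Type
  m0 : M
  upd : M → V → V → M

/-- The sequence of memory states along a play. -/
def memRun (Mem : Memory V) (π : ℕ → V) : ℕ → Mem.M
  | 0 => Mem.m0
  | k + 1 => Mem.upd (memRun Mem π k) (π k) (π (k + 1))

/-- A strategy for Eve using the memory structure `Mem`, given by a next-move function. -/
structure EveMemStrategy (A : Arena V) (Mem : Memory V) where
  move : V → Mem.M → V
  legal : ∀ v m, v ∈ A.eve → A.edge v (move v m)

def EveMemConsistent (A : Arena V) (Mem : Memory V) (σ : EveMemStrategy A Mem)
    (π : ℕ → V) : Prop :=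
  ∀ k, π k ∈ A.eve → π (k + 1) = σ.move (π k) (memRun Mem π k)

def EveMemWinsFrom (A : Arena V) (Mem : Memory V) (σ : EveMemStrategy A Mem)
    (Ω : Set (ℕ → V)) (v : V) : Prop :=
  ∀ π, IsPlay A π → π 0 = v → EveMemConsistent A Mem σ π → π ∈ Ω

/-- A strategy for Adam using the memory structure `Mem`, given by a next-move function. -/
structure AdamMemStrategy (A : Arena V) (Mem : Memory V) where
  move : V → Mem.M → V
  legal : ∀ v m, v ∉ A.eve → A.edge v (move v m)

def AdamMemConsistent (A : Arena V) (Mem : Memory V) (τ : AdamMemStrategy A Mem)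
    (π : ℕ → V) : Prop :=
  ∀ k, π k ∉ A.eve → π (k + 1) = τ.move (π k) (memRun Mem π k)

def AdamMemWinsFrom (A : Arena V) (Mem : Memory V) (τ : AdamMemStrategy A Mem)
    (Ω : Set (ℕ → V)) (v : V) : Prop :=
  ∀ π, IsPlay A π → π 0 = v → AdamMemConsistent A Mem τ π → π ∉ Ω

/-- A condition is prefix-independent if it is closed under adding and removing prefixes. -/
def PrefixIndependent (Ω : Set (ℕ → V)) : Prop :=
  ∀ π : ℕ → V, π ∈ Ω ↔ (fun k => π (k + 1)) ∈ Ω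

/-- A condition is Borel if it is a Borel subset of `V^ω` for the product topology,
where `V` carries the discrete topology. -/
def IsBorelCondition (Ω : Set (ℕ → V)) : Prop :=
  letI : TopologicalSpace V := ⊥
  @MeasurableSet (ℕ → V) (borel (ℕ → V)) Ω

/-- `distB π F k` is the number of steps from position `k` to the next visit of `F`
(`⊤` if `F` is never visited again). -/
noncomputable def distB (π : ℕ → V) (F : Set V) (k : ℕ) : ℕ∞ :=
  sInf ((fun j : ℕ => (j : ℕ∞)) '' {j | π (k + j) ∈ F})

/-- `distC π c k`: number of steps from position `k` to the next position whose
color is even and at most the color at position `k`. -/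
noncomputable def distC (π : ℕ → V) (c : V → ℕ) (k : ℕ) : ℕ∞ :=
  sInf ((fun j : ℕ => (j : ℕ∞)) '' {j | Even (c (π (k + j))) ∧ c (π (k + j)) ≤ c (π k)})

/-- Bounded uniform Büchi condition with bound `N`: `sup_k dist_k(π,F) ≤ N`. -/
def BndBuchi (F : Set V) (N : ℕ) : Set (ℕ → V) :=
  {π | ∀ k, distB π F k ≤ (N : ℕ∞)}

/-- Uniform Büchi condition with bound `N`: `limsup_k dist_k(π,F) ≤ N`. -/
def UnifBuchi (F : Set V) (N : ℕ) : Set (ℕ → V) :=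
  {π | Filter.limsup (fun k => distB π F k) Filter.atTop ≤ (N : ℕ∞)}

/-- Finitary Büchi condition: `limsup_k dist_k(π,F) < ∞`. -/
def FinBuchi (F : Set V) : Set (ℕ → V) :=
  {π | Filter.limsup (fun k => distB π F k) Filter.atTop < ⊤}

/-- Classical Büchi condition: `F` is visited infinitely often. -/
def BuchiCond (F : Set V) : Set (ℕ → V) :=
  {π | ∀ k, ∃ j, k ≤ j ∧ π j ∈ F}

/-- Bounded parity condition: `sup_k dist_k(π,c) < ∞`. -/
def BndParity (c : V → ℕ) : Set (ℕ → V) :=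
  {π | (⨆ k, distC π c k) < ⊤}

/-- Finitary parity condition: `limsup_k dist_k(π,c) < ∞`. -/
def FinParity (c : V → ℕ) : Set (ℕ → V) :=
  {π | Filter.limsup (fun k => distC π c k) Filter.atTop < ⊤}

/-- One-step predecessor operator for Eve. -/
def Pre (A : Arena V) (X : Set V) : Set V :=
  {u | (u ∈ A.eve ∧ ∃ v, A.edge u v ∧ v ∈ X) ∨ (u ∉ A.eve ∧ ∀ v, A.edge u v → v ∈ X)}

/-- Bounded attractor: `AttrE A k X` is the `k`-step attractor of `X` for Eve. -/
def AttrE (A : Arena V) : ℕ → Set V → Set V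
  | 0, X => X
  | k + 1, X => AttrE A k X ∪ Pre A (AttrE A k X)

theorem Pre_mono (A : Arena V) : Monotone (Pre A) := by
  intro X Y h u hu
  simp only [Pre, Set.mem_setOf_eq] at hu ⊢
  rcases hu with ⟨he, v, hv, hvX⟩ | ⟨ha, hall⟩
  · exact Or.inl ⟨he, v, hv, h hvX⟩
  · exact Or.inr ⟨ha, fun v hv => h (hall v hv)⟩

theorem AttrE_mono (A : Arena V) (N : ℕ) : Monotone (AttrE A N) := by
  induction N with
  | zero => intro X Y h; exact h
  | succ n ih =>
      intro X Y h
      exact Set.union_subset_union (ih h) (Pre_mono A (ih h))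

end GameDefs

namespace GameDefs

/-- The monotone map `Z ↦ Attr^E_N (S ∩ Pre(Z))`, bundled as an order hom. -/
def innerZ {V : Type} (A : Arena V) (N : ℕ) (S : Set V) : Set V →o Set V :=
  ⟨fun Z => AttrE A N (S ∩ Pre A Z),
   fun _ _ h => AttrE_mono A N (Set.inter_subset_inter (Set.Subset.refl S) (Pre_mono A h))⟩

/-- The monotone map `Y ↦ νZ. Attr^E_N ((F ∪ Y) ∩ Pre(Z))`, bundled as an order hom. -/
def midY {V : Type} (A : Arena V) (N : ℕ) (F : Set V) : Set V →o Set V :=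
  ⟨fun Y => OrderHom.gfp (innerZ A N (F ∪ Y)),
   fun _ _ h => OrderHom.gfp.monotone (OrderHom.le_def.mpr (fun Z =>
     AttrE_mono A N (Set.inter_subset_inter
       (Set.union_subset_union (Set.Subset.refl F) h) (Set.Subset.refl _))))⟩

/-- The monotone map `Y ↦ νZ. Attr^E_N ((F ∪ Y ∪ X) ∩ Pre(Z))`, bundled as an order hom. -/
def midYX {V : Type} (A : Arena V) (N : ℕ) (F X : Set V) : Set V →o Set V :=
  ⟨fun Y => OrderHom.gfp (innerZ A N (F ∪ Y ∪ X)),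
   fun _ _ h => OrderHom.gfp.monotone (OrderHom.le_def.mpr (fun Z =>
     AttrE_mono A N (Set.inter_subset_inter
       (Set.union_subset_union (Set.union_subset_union (Set.Subset.refl F) h)
         (Set.Subset.refl X)) (Set.Subset.refl _))))⟩

/-- The monotone map `X ↦ ⋃_{N∈ℕ} μY. νZ. Attr^E_N ((F ∪ Y ∪ X) ∩ Pre(Z))`. -/
def outerX {V : Type} (A : Arena V) (F : Set V) : Set V →o Set V :=
  ⟨fun X => ⋃ N : ℕ, OrderHom.lfp (midYX A N F X),
   fun _ _ h => Set.iUnion_mono (fun N => OrderHom.lfp.monotone (OrderHom.le_def.mpr (fun Y =>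
     OrderHom.gfp.monotone (OrderHom.le_def.mpr (fun Z =>
       AttrE_mono A N (Set.inter_subset_inter
         (Set.union_subset_union (Set.Subset.refl (F ∪ Y)) h)
         (Set.Subset.refl _)))))))⟩

end GameDefs

namespace GameDefs

open scoped Classical

variable {V : Type}

/-! ### Basic attractor lemmas -/

lemma attrE_succ (A : Arena V) (k : ℕ) (X : Set V) :
    AttrE A (k+1) X = AttrE A k X ∪ Pre A (AttrE A k X) := rfl

lemma subset_attrE (A : Arena V) (N : ℕ) (X : Set V) : X ⊆ AttrE A N X := by
  induction N with
  | zero => exact fun x hx => hx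
  | succ n ih => exact ih.trans Set.subset_union_left

lemma attrE_le (A : Arena V) {k m : ℕ} (h : k ≤ m) (X : Set V) :
    AttrE A k X ⊆ AttrE A m X := by
  induction m, h using Nat.le_induction with
  | base => exact fun x hx => hx
  | succ m hm ih => exact ih.trans Set.subset_union_left

/-! ### Strategies: defaults, winning strategies, combined strategy for Eve -/

noncomputable def defStrat (A : Arena V) : EveStrategy A :=
  ⟨fun _ v => (A.succ v).choose, fun _ v _ => (A.succ v).choose_spec⟩

noncomputable def winStrat (A : Arena V) (Ω : Set (ℕ → V)) (w : V) : EveStrategy A :=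
  if h : ∃ σ : EveStrategy A, EveWinsFrom A σ Ω w then h.choose else defStrat A

lemma winStrat_wins {A : Arena V} {Ω : Set (ℕ → V)} {w : V} (hw : w ∈ WE A Ω) :
    EveWinsFrom A (winStrat A Ω w) Ω w := by
  have hw' : ∃ σ : EveStrategy A, EveWinsFrom A σ Ω w := hw
  rw [winStrat, dif_pos hw']
  exact hw'.choose_spec

noncomputable def comboMove (A : Arena V) (Ω : Set (ℕ → V)) (Ws Z T : Set V) :
    List V → V → V := fun h v =>
  if hW : ∃ i, i < (h ++ [v]).length ∧ (h ++ [v]).getD i v ∈ Ws then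
    (winStrat A Ω ((h ++ [v]).getD (Nat.find hW) v)).move (h.drop (Nat.find hW)) v
  else if v ∈ T then
    (if hz : ∃ u, A.edge v u ∧ u ∈ Z then hz.choose else (A.succ v).choose)
  else if hr : ∃ k, v ∈ AttrE A k T then
    (if hz : ∃ u, A.edge v u ∧ u ∈ AttrE A (Nat.find hr - 1) T then hz.choose
     else (A.succ v).choose)
  else (A.succ v).choose

noncomputable def comboStrat (A : Arena V) (Ω : Set (ℕ → V)) (Ws Z T : Set V) :
    EveStrategy A := by
  refine ⟨comboMove A Ω Ws Z T, ?_⟩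
  intro h v hv
  simp only [comboMove]
  split_ifs with h1 h2 h3 h4 h5
  · exact (winStrat A Ω _).legal _ _ hv
  · exact h3.choose_spec.1
  · exact (A.succ v).choose_spec
  · exact h5.choose_spec.1
  · exact (A.succ v).choose_spec
  · exact (A.succ v).choose_spec

/-! ### History computations -/

lemma hist_app (π : ℕ → V) (k : ℕ) :
    hist π k ++ [π k] = (List.range (k+1)).map π := by
  rw [hist, List.range_succ, List.map_append, List.map_singleton]

lemma length_hist_app (π : ℕ → V) (k : ℕ) : (hist π k ++ [π k]).length = k + 1 := by
  rw [hist_app]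
  simp

lemma getD_hist_app (π : ℕ → V) {k i : ℕ} (h : i ≤ k) (d : V) :
    (hist π k ++ [π k]).getD i d = π i := by
  rw [hist_app]
  have hlen : i < ((List.range (k+1)).map π).length := by
    simp only [List.length_map, List.length_range]; omega
  rw [List.getD_eq_getElem _ _ hlen, List.getElem_map, List.getElem_range]

lemma drop_hist (π : ℕ → V) (k i : ℕ) :
    (hist π k).drop i = hist (fun t => π (i + t)) (k - i) := by
  apply List.ext_getElem
  · simp [hist]
  · intro n h1 h2
    simp only [hist, List.getElem_drop, List.getElem_map, List.getElem_range]

/-! ### Eve's side: the inner greatest fixpoint is contained in the winning region -/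

lemma gfp_subset_WE (A : Arena V) (F : Set V) (N : ℕ) :
    (OrderHom.gfp (innerZ A N (F ∪ WE A (FinBuchi F))) : Set V) ⊆ WE A (FinBuchi F) := by
  set Ws := WE A (FinBuchi F) with hWsdef
  set Z : Set V := OrderHom.gfp (innerZ A N (F ∪ Ws)) with hZdef
  have hZ : AttrE A N ((F ∪ Ws) ∩ Pre A Z) = Z := OrderHom.map_gfp (innerZ A N (F ∪ Ws))
  set T : Set V := (F ∪ Ws) ∩ Pre A Z with hTdef
  have hTPre : T ⊆ Pre A Z := Set.inter_subset_right
  have hTFW : T ⊆ F ∪ Ws := Set.inter_subset_left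
  intro z hz
  refine ⟨comboStrat A (FinBuchi F) Ws Z T, ?_⟩
  intro π hplay h0 hcons
  have hmove : ∀ k, π k ∈ A.eve →
      π (k+1) = comboMove A (FinBuchi F) Ws Z T (hist π k) (π k) := hcons
  by_cases hex : ∃ k, π k ∈ Ws
  · -- the play reaches the winning region: follow the winning strategy from there
    set k0 := Nat.find hex with hk0def
    have hk0 : π k0 ∈ Ws := Nat.find_spec hex
    have hmin : ∀ i, i < k0 → π i ∉ Ws := fun i hi => Nat.find_min hex hi
    have hWex : ∀ m, k0 ≤ m →
        ∃ i, i < (hist π m ++ [π m]).length ∧ (hist π m ++ [π m]).getD i (π m) ∈ Ws := by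
      intro m hm
      exact ⟨k0, by rw [length_hist_app]; omega, by rw [getD_hist_app π hm]; exact hk0⟩
    have hcons' : EveConsistent A (winStrat A (FinBuchi F) (π k0)) (fun t => π (k0 + t)) := by
      intro t ht
      have hm : k0 ≤ k0 + t := Nat.le_add_right _ _
      have heq := hmove (k0 + t) ht
      have hW := hWex (k0 + t) hm
      have hfind : Nat.find hW = k0 := by
        rw [Nat.find_eq_iff]
        refine ⟨⟨by rw [length_hist_app]; omega, by rw [getD_hist_app π hm]; exact hk0⟩, ?_⟩
        rintro i hi ⟨hlen, hmem⟩
        rw [getD_hist_app π (by omega : i ≤ k0 + t)] at hmem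
        exact hmin i hi hmem
      simp only [comboMove] at heq
      rw [dif_pos hW, hfind, getD_hist_app π hm, drop_hist, Nat.add_sub_cancel_left] at heq
      exact heq
    have hplay' : IsPlay A (fun t => π (k0 + t)) := fun t => hplay (k0 + t)
    have hmem' : (fun t => π (k0 + t)) ∈ FinBuchi F :=
      winStrat_wins hk0 (fun t => π (k0 + t)) hplay' rfl hcons'
    show π ∈ FinBuchi F
    simp only [FinBuchi, Set.mem_setOf_eq] at hmem' ⊢
    have hshift : ∀ i, distB π F (i + k0) = distB (fun t => π (k0 + t)) F i := by
      intro i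
      unfold distB
      have hset : {j | π (i + k0 + j) ∈ F} = {j | (fun t => π (k0 + t)) (i + j) ∈ F} := by
        ext j
        simp only [Set.mem_setOf_eq]
        rw [show i + k0 + j = k0 + (i + j) by omega]
      rw [hset]
    rw [← Filter.limsup_nat_add (fun k => distB π F k) k0]
    simp only [hshift]
    exact hmem'
  · -- the play never reaches the winning region: attractor strategy forces F every ≤ N steps
    push_neg at hex
    have hnW : ∀ m, ¬ ∃ i, i < (hist π m ++ [π m]).length ∧
        (hist π m ++ [π m]).getD i (π m) ∈ Ws := by
      rintro m ⟨i, hlen, hmem⟩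
      rw [length_hist_app] at hlen
      rw [getD_hist_app π (by omega : i ≤ m)] at hmem
      exact hex i hmem
    have stepT : ∀ k, π k ∈ T → π (k+1) ∈ Z := by
      intro k hk
      have hp : π k ∈ Pre A Z := hTPre hk
      simp only [Pre, Set.mem_setOf_eq] at hp
      by_cases he : π k ∈ A.eve
      · have heq := hmove k he
        have hz : ∃ u, A.edge (π k) u ∧ u ∈ Z := by
          rcases hp with ⟨_, u, hu1, hu2⟩ | ⟨hne, _⟩
          · exact ⟨u, hu1, hu2⟩
          · exact absurd he hne
        simp only [comboMove] at heq
        rw [dif_neg (hnW k), if_pos hk, dif_pos hz] at heq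
        rw [heq]
        exact hz.choose_spec.2
      · rcases hp with ⟨he', _⟩ | ⟨_, hall⟩
        · exact absurd he' he
        · exact hall _ (hplay k)
    have stepA : ∀ k (hr : ∃ m, π k ∈ AttrE A m T), π k ∉ T →
        π (k+1) ∈ AttrE A (Nat.find hr - 1) T := by
      intro k hr hnT
      have hrpos : Nat.find hr ≠ 0 := by
        intro h
        have hsp := Nat.find_spec hr
        rw [h] at hsp
        exact hnT hsp
      have hmem : π k ∈ AttrE A (Nat.find hr) T := Nat.find_spec hr
      have hnotm : π k ∉ AttrE A (Nat.find hr - 1) T := Nat.find_min hr (by omega)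
      have hpre : π k ∈ Pre A (AttrE A (Nat.find hr - 1) T) := by
        rw [show Nat.find hr = Nat.find hr - 1 + 1 by omega, attrE_succ] at hmem
        rcases hmem with h | h
        · exact absurd h hnotm
        · exact h
      simp only [Pre, Set.mem_setOf_eq] at hpre
      by_cases he : π k ∈ A.eve
      · have heq := hmove k he
        have hz : ∃ u, A.edge (π k) u ∧ u ∈ AttrE A (Nat.find hr - 1) T := by
          rcases hpre with ⟨_, u, h1, h2⟩ | ⟨hne, _⟩
          · exact ⟨u, h1, h2⟩
          · exact absurd he hne
        simp only [comboMove] at heq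
        rw [dif_neg (hnW k), if_neg hnT, dif_pos hr, dif_pos hz] at heq
        rw [heq]
        exact hz.choose_spec.2
      · rcases hpre with ⟨he', _⟩ | ⟨_, hall⟩
        · exact absurd he' he
        · exact hall _ (hplay k)
    have hInv : ∀ k, π k ∈ AttrE A N T := by
      intro k
      induction k with
      | zero =>
        rw [← hZ] at hz
        rw [h0]
        exact hz
      | succ k ih =>
        by_cases hkT : π k ∈ T
        · have hstep := stepT k hkT
          rw [← hZ] at hstep
          exact hstep
        · have hr : ∃ m, π k ∈ AttrE A m T := ⟨N, ih⟩
          have hle : Nat.find hr ≤ N := Nat.find_min' hr ih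
          exact attrE_le A (by omega : Nat.find hr - 1 ≤ N) T (stepA k hr hkT)
    have hhit : ∀ r k, π k ∈ AttrE A r T → ∃ j, j ≤ r ∧ π (k + j) ∈ T := by
      intro r
      induction r with
      | zero => exact fun k hk => ⟨0, le_refl 0, hk⟩
      | succ r ih =>
        intro k hk
        by_cases hkT : π k ∈ T
        · exact ⟨0, by omega, hkT⟩
        · by_cases hkr : π k ∈ AttrE A r T
          · obtain ⟨j, hj, hT⟩ := ih k hkr
            exact ⟨j, by omega, hT⟩
          · have hr : ∃ m, π k ∈ AttrE A m T := ⟨r+1, hk⟩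
            have hle : Nat.find hr ≤ r + 1 := Nat.find_min' hr hk
            have hst : π (k+1) ∈ AttrE A r T := attrE_le A (by omega) T (stepA k hr hkT)
            obtain ⟨j, hj, hT⟩ := ih (k+1) hst
            refine ⟨j+1, by omega, ?_⟩
            rw [show k + (j+1) = (k+1) + j by omega]
            exact hT
    have hbound : ∀ k, distB π F k ≤ (N : ℕ∞) := by
      intro k
      obtain ⟨j, hj, hT⟩ := hhit N k (hInv k)
      have hF : π (k+j) ∈ F := by
        rcases hTFW hT with h | h
        · exact h
        · exact absurd h (hex _)
      calc distB π F k ≤ (j : ℕ∞) := sInf_le ⟨j, hF, rfl⟩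
        _ ≤ (N : ℕ∞) := Nat.cast_le.mpr hj
    show π ∈ FinBuchi F
    simp only [FinBuchi, Set.mem_setOf_eq]
    have hls : Filter.limsup (fun k => distB π F k) Filter.atTop ≤ (N : ℕ∞) := by
      rw [Filter.limsup_eq]
      exact sInf_le (Filter.Eventually.of_forall hbound)
    exact lt_of_le_of_lt hls (ENat.coe_lt_top N)

/-! ### Finite plays consistent with a fixed Eve strategy -/

structure FinPlay (A : Arena V) (σ : EveStrategy A) where
  n : ℕ
  f : ℕ → V
  edge' : ∀ i, i < n → A.edge (f i) (f (i+1))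
  cons' : ∀ i, i < n → f i ∈ A.eve → f (i+1) = σ.move (hist f i) (f i)

def Ext {A : Arena V} {σ : EveStrategy A} (p q : FinPlay A σ) : Prop :=
  p.n ≤ q.n ∧ ∀ i, i ≤ p.n → q.f i = p.f i

lemma ext_refl {A : Arena V} {σ : EveStrategy A} (p : FinPlay A σ) : Ext p p :=
  ⟨le_rfl, fun _ _ => rfl⟩

lemma ext_trans {A : Arena V} {σ : EveStrategy A} {p q r : FinPlay A σ}
    (h1 : Ext p q) (h2 : Ext q r) : Ext p r :=
  ⟨le_trans h1.1 h2.1, fun i hi => (h2.2 i (le_trans hi h1.1)).trans (h1.2 i hi)⟩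

def stepPlay {A : Arena V} {σ : EveStrategy A} (p : FinPlay A σ) (v' : V)
    (hedge : A.edge (p.f p.n) v')
    (hc : p.f p.n ∈ A.eve → v' = σ.move (hist p.f p.n) (p.f p.n)) : FinPlay A σ where
  n := p.n + 1
  f := fun i => if i = p.n + 1 then v' else p.f i
  edge' := by
    intro i hi
    by_cases h : i = p.n
    · subst h
      simp only [if_neg (by omega : ¬ p.n = p.n + 1), if_pos rfl]
      exact hedge
    · have hi' : i < p.n := by omega
      simp only [if_neg (by omega : ¬ i = p.n + 1), if_neg (by omega : ¬ i + 1 = p.n + 1)]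
      exact p.edge' i hi'
  cons' := by
    intro i hi he
    have hhist : hist (fun j => if j = p.n + 1 then v' else p.f j) i = hist p.f i := by
      unfold hist
      apply List.map_congr_left
      intro a ha
      have : a < i := List.mem_range.mp ha
      exact if_neg (by omega)
    by_cases h : i = p.n
    · subst h
      simp only [if_neg (by omega : ¬ p.n = p.n + 1), if_pos rfl] at he ⊢
      rw [hhist]
      exact hc he
    · have hi' : i < p.n := by omega
      simp only [if_neg (by omega : ¬ i = p.n + 1), if_neg (by omega : ¬ i + 1 = p.n + 1)]
        at he ⊢
      rw [hhist]
      exact p.cons' i hi' he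

lemma stepPlay_n {A : Arena V} {σ : EveStrategy A} (p : FinPlay A σ) (v' : V)
    (h1 : A.edge (p.f p.n) v') (h2 : p.f p.n ∈ A.eve → v' = σ.move (hist p.f p.n) (p.f p.n)) :
    (stepPlay p v' h1 h2).n = p.n + 1 := rfl

lemma stepPlay_f_top {A : Arena V} {σ : EveStrategy A} (p : FinPlay A σ) (v' : V)
    (h1 : A.edge (p.f p.n) v') (h2 : p.f p.n ∈ A.eve → v' = σ.move (hist p.f p.n) (p.f p.n)) :
    (stepPlay p v' h1 h2).f (p.n + 1) = v' := if_pos rfl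

lemma stepPlay_f_le {A : Arena V} {σ : EveStrategy A} (p : FinPlay A σ) (v' : V)
    (h1 : A.edge (p.f p.n) v') (h2 : p.f p.n ∈ A.eve → v' = σ.move (hist p.f p.n) (p.f p.n))
    {i : ℕ} (hi : i ≤ p.n) : (stepPlay p v' h1 h2).f i = p.f i := if_neg (by omega)

lemma stepPlay_ext {A : Arena V} {σ : EveStrategy A} (p : FinPlay A σ) (v' : V)
    (h1 : A.edge (p.f p.n) v') (h2 : p.f p.n ∈ A.eve → v' = σ.move (hist p.f p.n) (p.f p.n)) :
    Ext p (stepPlay p v' h1 h2) :=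
  ⟨Nat.le_succ _, fun i hi => stepPlay_f_le p v' h1 h2 hi⟩

/-! ### Adam's side: the dual fixpoint and the window construction -/

def GoodW (A : Arena V) (σ : EveStrategy A) (S : Set V) (N : ℕ) (b : ℕ)
    (p : FinPlay A σ) : Prop :=
  ∃ q : FinPlay A σ, Ext p q ∧ ∃ k, b ≤ k ∧ q.n = k + N ∧ ∀ j, j ≤ N → q.f (k + j) ∉ S

def WProp (A : Arena V) (σ : EveStrategy A) (S : Set V) (N : ℕ) (u : V) : Prop :=
  ∀ p : FinPlay A σ, p.f p.n = u → GoodW A σ S N p.n p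

lemma deferP (A : Arena V) (σ : EveStrategy A) (S : Set V) (N : ℕ) (p : FinPlay A σ) (b : ℕ)
    (hb : b ≤ p.n) (hw : p.f p.n ∉ Pre A {u | WProp A σ S N u}ᶜ) : GoodW A σ S N b p := by
  by_cases he : p.f p.n ∈ A.eve
  · have hv' : WProp A σ S N (σ.move (hist p.f p.n) (p.f p.n)) := by
      by_contra hc
      exact hw (Or.inl ⟨he, _, σ.legal _ _ he, hc⟩)
    obtain ⟨q, hext, k, hk, hn, hwin⟩ :=
      hv' (stepPlay p _ (σ.legal _ _ he) (fun _ => rfl))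
        (stepPlay_f_top p _ (σ.legal _ _ he) (fun _ => rfl))
    refine ⟨q, ext_trans (stepPlay_ext p _ (σ.legal _ _ he) (fun _ => rfl)) hext, k, ?_, hn, hwin⟩
    rw [stepPlay_n] at hk
    omega
  · have hv' : ∃ u, A.edge (p.f p.n) u ∧ WProp A σ S N u := by
      by_contra hc
      push_neg at hc
      exact hw (Or.inr ⟨he, fun u hu => hc u hu⟩)
    obtain ⟨v', hedge, hWp⟩ := hv'
    have hcv : p.f p.n ∈ A.eve → v' = σ.move (hist p.f p.n) (p.f p.n) := fun h => absurd h he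
    obtain ⟨q, hext, k, hk, hn, hwin⟩ :=
      hWp (stepPlay p v' hedge hcv) (stepPlay_f_top p v' hedge hcv)
    refine ⟨q, ext_trans (stepPlay_ext p v' hedge hcv) hext, k, ?_, hn, hwin⟩
    rw [stepPlay_n] at hk
    omega

lemma walk (A : Arena V) (σ : EveStrategy A) (S : Set V) (N : ℕ) :
    ∀ m, m ≤ N → ∀ b (p : FinPlay A σ), p.n = b + (N - m) →
    (∀ i, b ≤ i → i < p.n → p.f i ∉ S) →
    p.f p.n ∉ AttrE A m (S ∩ Pre A {u | WProp A σ S N u}ᶜ) → GoodW A σ S N b p := by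
  intro m
  induction m with
  | zero =>
    intro hm b p hn hpre hattr
    by_cases hS : p.f p.n ∈ S
    · refine deferP A σ S N p b (by omega) ?_
      intro hPre
      exact hattr ⟨hS, hPre⟩
    · refine ⟨p, ext_refl p, b, le_rfl, by omega, ?_⟩
      intro j hj
      rcases lt_or_eq_of_le (show b + j ≤ p.n by omega) with h | h
      · exact hpre (b+j) (by omega) h
      · rw [h]; exact hS
  | succ m ih =>
    intro hm b p hn hpre hattr
    rw [attrE_succ] at hattr
    have h1 : p.f p.n ∉ AttrE A m (S ∩ Pre A {u | WProp A σ S N u}ᶜ) :=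
      fun h => hattr (Or.inl h)
    have h2 : p.f p.n ∉ Pre A (AttrE A m (S ∩ Pre A {u | WProp A σ S N u}ᶜ)) :=
      fun h => hattr (Or.inr h)
    by_cases hS : p.f p.n ∈ S
    · refine deferP A σ S N p b (by omega) ?_
      intro hPre
      exact h1 (subset_attrE A m _ ⟨hS, hPre⟩)
    · obtain ⟨v', hedge, hcv, hv'⟩ : ∃ v', A.edge (p.f p.n) v' ∧
          (p.f p.n ∈ A.eve → v' = σ.move (hist p.f p.n) (p.f p.n)) ∧
          v' ∉ AttrE A m (S ∩ Pre A {u | WProp A σ S N u}ᶜ) := by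
        by_cases he : p.f p.n ∈ A.eve
        · refine ⟨σ.move (hist p.f p.n) (p.f p.n), σ.legal _ _ he, fun _ => rfl, ?_⟩
          intro hmem
          exact h2 (Or.inl ⟨he, _, σ.legal _ _ he, hmem⟩)
        · have hne : ¬ ∀ u, A.edge (p.f p.n) u →
              u ∈ AttrE A m (S ∩ Pre A {u | WProp A σ S N u}ᶜ) :=
            fun hall => h2 (Or.inr ⟨he, hall⟩)
          push_neg at hne
          obtain ⟨v', hv1, hv2⟩ := hne
          exact ⟨v', hv1, fun h => absurd h he, hv2⟩
      have hn' : (stepPlay p v' hedge hcv).n = b + (N - m) := by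
        rw [stepPlay_n, hn]
        omega
      have hpre' : ∀ i, b ≤ i → i < (stepPlay p v' hedge hcv).n →
          (stepPlay p v' hedge hcv).f i ∉ S := by
        intro i hbi hilt
        rw [stepPlay_n] at hilt
        rcases lt_or_eq_of_le (show i ≤ p.n by omega) with h | h
        · rw [stepPlay_f_le p v' hedge hcv (by omega)]
          exact hpre i hbi h
        · rw [stepPlay_f_le p v' hedge hcv (by omega), h]
          exact hS
      have hattr' : (stepPlay p v' hedge hcv).f (stepPlay p v' hedge hcv).n
          ∉ AttrE A m (S ∩ Pre A {u | WProp A σ S N u}ᶜ) := by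
        rw [stepPlay_n, stepPlay_f_top]
        exact hv'
      obtain ⟨q, hext, hrest⟩ := ih (by omega) b (stepPlay p v' hedge hcv) hn' hpre' hattr'
      exact ⟨q, ext_trans (stepPlay_ext p v' hedge hcv) hext, hrest⟩

/-! ### The dual fixpoint -/

def dualZ (A : Arena V) (N : ℕ) (S : Set V) : Set V →o Set V :=
  ⟨fun Z' => (AttrE A N (S ∩ Pre A Z'ᶜ))ᶜ, by
    intro a b hab
    apply Set.compl_subset_compl.mpr
    exact AttrE_mono A N (Set.inter_subset_inter (le_refl S)
      (Pre_mono A (Set.compl_subset_compl.mpr hab)))⟩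

lemma lfp_dualZ (A : Arena V) (N : ℕ) (S : Set V) :
    OrderHom.lfp (dualZ A N S) = (OrderHom.gfp (innerZ A N S))ᶜ := by
  apply le_antisymm
  · apply OrderHom.lfp_le
    show (AttrE A N (S ∩ Pre A (OrderHom.gfp (innerZ A N S))ᶜᶜ))ᶜ ⊆ _
    rw [compl_compl]
    rw [show AttrE A N (S ∩ Pre A (OrderHom.gfp (innerZ A N S))) = OrderHom.gfp (innerZ A N S)
      from OrderHom.map_gfp (innerZ A N S)]
  · have hfp : (AttrE A N (S ∩ Pre A ((OrderHom.lfp (dualZ A N S))ᶜ)))ᶜ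
        = OrderHom.lfp (dualZ A N S) := OrderHom.map_lfp (dualZ A N S)
    have hfix : AttrE A N (S ∩ Pre A ((OrderHom.lfp (dualZ A N S))ᶜ))
        = (OrderHom.lfp (dualZ A N S))ᶜ := by
      have h2 := congrArg compl hfp
      rwa [compl_compl] at h2
    have hle : (OrderHom.lfp (dualZ A N S))ᶜ ≤ OrderHom.gfp (innerZ A N S) :=
      OrderHom.le_gfp (innerZ A N S) (le_of_eq hfix.symm)
    have := Set.compl_subset_compl.mpr hle
    rwa [compl_compl] at this

lemma lfp_dual_le_WProp (A : Arena V) (σ : EveStrategy A) (S : Set V) (N : ℕ) :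
    OrderHom.lfp (dualZ A N S) ⊆ {u | WProp A σ S N u} := by
  apply OrderHom.lfp_le
  intro u hu p hp
  refine walk A σ S N N le_rfl p.n p (by omega) (fun i h1 h2 => absurd h2 (by omega)) ?_
  rw [hp]
  exact hu

/-! ### Adam's side: main lemma -/

lemma WE_subset_lfp (A : Arena V) (F : Set V) :
    WE A (FinBuchi F) ⊆ OrderHom.lfp (outerX A F) := by
  intro v hv
  by_contra hvL
  obtain ⟨σ, hwin⟩ := hv
  set L : Set V := OrderHom.lfp (outerX A F) with hLdef
  have hL : (⋃ N : ℕ, OrderHom.lfp (midYX A N F L)) = L := OrderHom.map_lfp (outerX A F)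
  have hLN : ∀ N2 : ℕ, OrderHom.lfp (midYX A N2 F L) ⊆ L := by
    intro N2
    conv_rhs => rw [← hL]
    exact Set.subset_iUnion (fun N3 => OrderHom.lfp (midYX A N3 F L)) N2
  have key : ∀ N2 : ℕ, ∀ u, u ∉ L →
      WProp A σ (F ∪ OrderHom.lfp (midYX A N2 F L) ∪ L) N2 u := by
    intro N2 u hu
    have hfix : OrderHom.gfp (innerZ A N2 (F ∪ OrderHom.lfp (midYX A N2 F L) ∪ L))
        = OrderHom.lfp (midYX A N2 F L) := OrderHom.map_lfp (midYX A N2 F L)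
    have hmem : u ∈ OrderHom.lfp (dualZ A N2 (F ∪ OrderHom.lfp (midYX A N2 F L) ∪ L)) := by
      rw [lfp_dualZ, hfix]
      exact fun h => hu (hLN N2 h)
    exact lfp_dual_le_WProp A σ _ N2 hmem
  have step : ∀ (i : ℕ) (p : FinPlay A σ), p.f p.n ∉ L →
      ∃ q : FinPlay A σ, Ext p q ∧ q.f q.n ∉ L ∧
        ∃ k, p.n ≤ k ∧ q.n = k + (i+1) ∧ ∀ j, j ≤ i+1 → q.f (k+j) ∉ F := by
    intro i p hp
    obtain ⟨q, hext, k, hk, hn, hout⟩ := key (i+1) (p.f p.n) hp p rfl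
    refine ⟨q, hext, ?_, k, hk, hn, fun j hj hF => hout j hj (Or.inl (Or.inl hF))⟩
    have hend := hout (i+1) le_rfl
    rw [← hn] at hend
    exact fun h => hend (Or.inr h)
  let st : ℕ → {p : FinPlay A σ // p.f p.n ∉ L} := fun i =>
    Nat.rec
      ⟨⟨0, fun _ => v, fun i h => absurd h (Nat.not_lt_zero i),
        fun i h => absurd h (Nat.not_lt_zero i)⟩, hvL⟩
      (fun i prev => ⟨(step i prev.1 prev.2).choose,
        (step i prev.1 prev.2).choose_spec.2.1⟩) i
  have stSpec : ∀ i, Ext (st i).1 (st (i+1)).1 ∧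
      ∃ k, (st i).1.n ≤ k ∧ (st (i+1)).1.n = k + (i+1) ∧
        ∀ j, j ≤ i+1 → (st (i+1)).1.f (k+j) ∉ F := by
    intro i
    have h := (step i (st i).1 (st i).2).choose_spec
    exact ⟨h.1, h.2.2⟩
  have hnmono : ∀ i j, i ≤ j → (st i).1.n ≤ (st j).1.n := by
    intro i j hij
    induction j, hij using Nat.le_induction with
    | base => exact le_rfl
    | succ j hij ih => exact le_trans ih (stSpec j).1.1
  have hge : ∀ i, i ≤ (st i).1.n := by
    intro i
    induction i with
    | zero => exact Nat.zero_le _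
    | succ i ih =>
      obtain ⟨k, hk, hn, _⟩ := (stSpec i).2
      omega
  have agreeS : ∀ i j, i ≤ j → ∀ m, m ≤ (st i).1.n → (st j).1.f m = (st i).1.f m := by
    intro i j hij
    induction j, hij using Nat.le_induction with
    | base => exact fun m _ => rfl
    | succ j hij ih =>
      intro m hm
      rw [(stSpec j).1.2 m (le_trans hm (hnmono i j hij))]
      exact ih m hm
  set π : ℕ → V := fun m => (st m).1.f m with hπdef
  have pi_eq : ∀ i m, m ≤ (st i).1.n → π m = (st i).1.f m := by
    intro i m hm
    rcases le_total i m with h | h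
    · exact agreeS i m h m hm
    · exact (agreeS m i h m (hge m)).symm
  have hplay : IsPlay A π := by
    intro m
    have h1 : m + 1 ≤ (st (m+1)).1.n := hge (m+1)
    rw [pi_eq (m+1) m (le_trans (Nat.le_succ m) h1), pi_eq (m+1) (m+1) h1]
    exact (st (m+1)).1.edge' m (by omega)
  have hcons : EveConsistent A σ π := by
    intro m hm
    have h1 : m + 1 ≤ (st (m+1)).1.n := hge (m+1)
    have e1 : π m = (st (m+1)).1.f m := pi_eq (m+1) m (le_trans (Nat.le_succ m) h1)
    have e2 : π (m+1) = (st (m+1)).1.f (m+1) := pi_eq (m+1) (m+1) h1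
    have hhist : hist π m = hist ((st (m+1)).1.f) m := by
      unfold hist
      apply List.map_congr_left
      intro a ha
      have ham : a < m := List.mem_range.mp ha
      exact pi_eq (m+1) a (le_trans (by omega : a ≤ m + 1) h1)
    rw [e2, hhist, e1]
    exact (st (m+1)).1.cons' m (by omega) (by rw [← e1]; exact hm)
  have h0 : π 0 = v := rfl
  have hFB := hwin π hplay h0 hcons
  have hwindow : ∀ i : ℕ, ∃ k, i ≤ k ∧ ∀ j, j ≤ i+1 → π (k+j) ∉ F := by
    intro i
    obtain ⟨k, hk, hn, hout⟩ := (stSpec i).2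
    refine ⟨k, le_trans (hge i) hk, fun j hj => ?_⟩
    rw [pi_eq (i+1) (k+j) (by omega)]
    exact hout j hj
  have hbig : ∀ i : ℕ, ∃ k, i ≤ k ∧ ((i : ℕ∞) + 2) ≤ distB π F k := by
    intro i
    obtain ⟨k, hk, hout⟩ := hwindow i
    refine ⟨k, hk, le_sInf ?_⟩
    rintro x ⟨j, hj, rfl⟩
    have hj2 : ¬ j ≤ i + 1 := fun h => hout j h hj
    have hij : (i + 2 : ℕ) ≤ j := by omega
    calc (i : ℕ∞) + 2 = ((i + 2 : ℕ) : ℕ∞) := by push_cast; ring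
      _ ≤ (j : ℕ∞) := Nat.cast_le.mpr hij
  have htop : Filter.limsup (fun k => distB π F k) Filter.atTop = ⊤ := by
    rw [Filter.limsup_eq]
    refine le_antisymm le_top (le_sInf ?_)
    intro b hb
    rw [Set.mem_setOf_eq, Filter.eventually_atTop] at hb
    obtain ⟨K, hK⟩ := hb
    by_contra hbt
    have hblt : b < ⊤ := lt_of_le_of_ne le_top (fun h => hbt (h ▸ le_rfl))
    obtain ⟨n0, rfl⟩ : ∃ n0 : ℕ, b = (n0 : ℕ∞) := by
      rcases b with _ | n0
      · exact absurd rfl (ne_of_lt hblt)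
      · exact ⟨n0, rfl⟩
    obtain ⟨k, hk, hd⟩ := hbig (max K n0)
    have hle := hK k (le_trans (le_max_left _ _) hk)
    have hcontr : ((max K n0 : ℕ) : ℕ∞) + 2 ≤ (n0 : ℕ∞) := le_trans hd hle
    have : ((max K n0 + 2 : ℕ) : ℕ∞) ≤ ((n0 : ℕ) : ℕ∞) := by
      calc ((max K n0 + 2 : ℕ) : ℕ∞) = ((max K n0 : ℕ) : ℕ∞) + 2 := by push_cast; ring
        _ ≤ (n0 : ℕ∞) := hcontr
    have := Nat.cast_le.mp this
    omega
  simp only [FinBuchi, Set.mem_setOf_eq, htop] at hFB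
  exact lt_irrefl ⊤ hFB

end GameDefs

open GameDefs in
/-- `W_E(FinBüchi(F)) = μX.(⋃_N μY.νZ.Attr^E_N((F ∪ Y ∪ X) ∩ Pre(Z)))`. -/
theorem stmt11 {V : Type} [Countable V] (A : Arena V) (F : Set V) :
    WE A (FinBuchi F) = OrderHom.lfp (outerX A F) := by
  apply Set.Subset.antisymm
  · exact WE_subset_lfp A F
  · apply OrderHom.lfp_le
    intro v hv
    have hv' : v ∈ ⋃ N : ℕ, OrderHom.lfp (midYX A N F (WE A (FinBuchi F))) := hv
    rcases Set.mem_iUnion.mp hv' with ⟨N, hN⟩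
    have h2 : OrderHom.lfp (midYX A N F (WE A (FinBuchi F))) ⊆ WE A (FinBuchi F) := by
      apply OrderHom.lfp_le
      intro u hu
      have hU : F ∪ WE A (FinBuchi F) ∪ WE A (FinBuchi F) = F ∪ WE A (FinBuchi F) := by
        rw [Set.union_assoc, Set.union_self]
      have hu' : u ∈ OrderHom.gfp (innerZ A N (F ∪ WE A (FinBuchi F) ∪ WE A (FinBuchi F))) := hu
      rw [hU] at hu'
      exact gfp_subset_WE A F N hu'
    exact h2 hN
end

section
/- For every arena A over a countable vertex set equipped with a coloring function c : V → {0,...,d}, Eve has a finite-memory strategy using at most ℓ+1 memory states that is winning from every vertex of her winning set W_E(BndParity(c)) for the bounded parity condition BndParity(c), where ℓ is the number of odd colors in {0,...,d}. -/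
open Filter Set

namespace BndAux

open GameDefs OrderHom OrdinalApprox

/-! ### Helpers on `ℕ∞`-valued distances -/

theorem sInf_image_le_iff {S : Set ℕ} {n : ℕ} :
    sInf ((fun j : ℕ => (j : ℕ∞)) '' S) ≤ (n : ℕ∞) ↔ ∃ j ∈ S, j ≤ n := by
  constructor
  · intro h
    by_contra hc
    push_neg at hc
    have : (n : ℕ∞) + 1 ≤ sInf ((fun j : ℕ => (j : ℕ∞)) '' S) := by
      apply le_sInf
      rintro x ⟨j, hj, rfl⟩
      have hj' := hc j hj
      simp only []
      exact_mod_cast Nat.succ_le_of_lt hj'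
    have h2 : (n : ℕ∞) < (n : ℕ∞) :=
      lt_of_lt_of_le (by exact_mod_cast Nat.lt_succ_self n) (le_trans this h)
    exact lt_irrefl _ h2
  · rintro ⟨j, hj, hjn⟩
    refine le_trans (sInf_le ⟨j, hj, rfl⟩) ?_
    simp only []
    exact_mod_cast hjn

theorem distB_le_iff {V : Type} {π : ℕ → V} {F : Set V} {k n : ℕ} :
    distB π F k ≤ (n : ℕ∞) ↔ ∃ j ≤ n, π (k + j) ∈ F := by
  rw [distB, sInf_image_le_iff]
  constructor
  · rintro ⟨j, hj, hjn⟩; exact ⟨j, hjn, hj⟩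
  · rintro ⟨j, hjn, hj⟩; exact ⟨j, hj, hjn⟩

theorem distC_le_iff {V : Type} {π : ℕ → V} {c : V → ℕ} {k n : ℕ} :
    distC π c k ≤ (n : ℕ∞) ↔ ∃ j ≤ n, Even (c (π (k + j))) ∧ c (π (k + j)) ≤ c (π k) := by
  rw [distC, sInf_image_le_iff]
  constructor
  · rintro ⟨j, hj, hjn⟩; exact ⟨j, hjn, hj⟩
  · rintro ⟨j, hjn, hj⟩; exact ⟨j, hj, hjn⟩

/-- An eventually-antitone sequence of naturals is eventually constant. -/
theorem nat_eventually_const (f : ℕ → ℕ) (t0 : ℕ) (h : ∀ k, t0 ≤ k → f (k + 1) ≤ f k) :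
    ∃ t1, t0 ≤ t1 ∧ ∀ k, t1 ≤ k → f k = f t1 := by
  have hanti : ∀ a b, t0 ≤ a → a ≤ b → f b ≤ f a := by
    intro a b ha hab
    induction b with
    | zero =>
      have : a = 0 := Nat.le_zero.mp hab
      subst this; exact le_rfl
    | succ b ih =>
      rcases Nat.lt_or_ge a (b+1) with hlt | hge
      · have hab' : a ≤ b := by omega
        exact le_trans (h b (le_trans ha hab')) (ih hab')
      · have : a = b + 1 := by omega
        subst this; exact le_rfl
  have hne : {n | ∃ k, t0 ≤ k ∧ f k = n}.Nonempty := ⟨f t0, t0, le_rfl, rfl⟩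
  obtain ⟨t1, ht0, hft1⟩ := Nat.sInf_mem hne
  refine ⟨t1, ht0, fun k hk => le_antisymm ?_ ?_⟩
  · exact hanti t1 k ht0 hk
  · rw [hft1]; exact Nat.sInf_le ⟨k, le_trans ht0 hk, rfl⟩

/-- An antitone sequence of ordinals is eventually constant. -/
theorem ordinal_eventually_const (f : ℕ → Ordinal) (h : ∀ k, f (k + 1) ≤ f k) :
    ∃ t1, ∀ k, t1 ≤ k → f k = f t1 := by
  have hanti : ∀ a b, a ≤ b → f b ≤ f a := by
    intro a b hab
    induction b with
    | zero => simp_all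
    | succ b ih =>
      rcases Nat.lt_or_ge a (b+1) with hlt | hge
      · have hab' : a ≤ b := by omega
        exact le_trans (h b) (ih hab')
      · have : a = b + 1 := by omega
        subst this; exact le_rfl
  have hne : (Set.range f).Nonempty := ⟨f 0, 0, rfl⟩
  obtain ⟨t1, hft1⟩ := csInf_mem hne
  refine ⟨t1, fun k hk => le_antisymm ?_ ?_⟩
  · exact hanti t1 k hk
  · rw [hft1]; exact csInf_le (OrderBot.bddBelow _) ⟨k, rfl⟩

end BndAux

namespace BndAux

open GameDefs OrderHom OrdinalApprox

section Buchi

variable {U : Type} (B : Arena U) (F : Set U)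

/-- The per-play bounded Büchi condition. -/
def OmegaB : Set (ℕ → U) := {π | ∃ N : ℕ, ∀ k, distB π F k ≤ (N : ℕ∞)}

theorem attrE_le_succ (n : ℕ) (X : Set U) : AttrE B n X ⊆ AttrE B (n + 1) X :=
  Set.subset_union_left

theorem attrE_idx_mono {n n' : ℕ} (h : n ≤ n') (X : Set U) : AttrE B n X ⊆ AttrE B n' X := by
  induction h with
  | refl => exact le_rfl
  | step h ih => exact le_trans ih (attrE_le_succ B _ X)

theorem subset_attrE (n : ℕ) (X : Set U) : X ⊆ AttrE B n X :=
  attrE_idx_mono B (Nat.zero_le n) X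

/-- The one-step operator for the uniform Büchi game relative to `X`. -/
def Phi (N : ℕ) (X : Set U) : Set U →o Set U where
  toFun := fun Y => AttrE B N ((F ∩ Pre B Y) ∪ X)
  monotone' := fun Y Y' h => AttrE_mono B N
    (Set.union_subset_union_left X (Set.inter_subset_inter_right F (Pre_mono B h)))

/-- `Z N X`: vertices from which Eve can within `N` steps reach `F ∩ Pre Z ∪ X`, recursively. -/
def Z (N : ℕ) (X : Set U) : Set U := OrderHom.gfp (Phi B F N X)

theorem Z_eq (N : ℕ) (X : Set U) :
    Z B F N X = AttrE B N ((F ∩ Pre B (Z B F N X)) ∪ X) :=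
  (OrderHom.map_gfp (Phi B F N X)).symm

theorem Z_mono_X (N : ℕ) {X X' : Set U} (h : X ⊆ X') : Z B F N X ⊆ Z B F N X' := by
  apply OrderHom.le_gfp
  calc Z B F N X = Phi B F N X (Z B F N X) := (OrderHom.map_gfp _).symm
    _ ≤ Phi B F N X' (Z B F N X) := AttrE_mono B N (Set.union_subset_union_right _ h)

theorem subset_Z (N : ℕ) (X : Set U) : X ⊆ Z B F N X := by
  apply OrderHom.le_gfp
  exact le_trans (Set.subset_union_right) (subset_attrE B N _)

/-- The stage operator. -/
def Theta : Set U →o Set U where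
  toFun := fun X => ⋃ N, Z B F N X
  monotone' := fun X X' h => Set.iUnion_mono fun N => Z_mono_X B F N h

theorem Z_le_Theta (N : ℕ) (X : Set U) : Z B F N X ⊆ Theta B F X :=
  Set.subset_iUnion (fun N => Z B F N X) N

/-- Eve's winning region for the per-play bounded Büchi condition. -/
def Wreg : Set U := OrderHom.lfp (Theta B F)

theorem theta_Wreg : Theta B F (Wreg B F) = Wreg B F := OrderHom.map_lfp _

/-- The ordinal-indexed stages. -/
def stage (β : Ordinal) : Set U := lfpApprox (Theta B F) ⊥ β

theorem stage_mono {β γ : Ordinal} (h : β ≤ γ) : stage B F β ⊆ stage B F γ :=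
  lfpApprox_monotone (Theta B F) h

theorem mem_stage_iff {u : U} {β : Ordinal} :
    u ∈ stage B F β ↔ ∃ γ < β, u ∈ Theta B F (stage B F γ) := by
  rw [stage, lfpApprox]
  constructor
  · rintro (hu | hu)
    · simp at hu
    · simp only [Set.iSup_eq_iUnion, Set.mem_iUnion] at hu
      obtain ⟨γ, hγ, hu⟩ := hu
      exact ⟨γ, hγ, hu⟩
  · rintro ⟨γ, hγ, hu⟩
    exact Or.inr (Set.mem_iUnion₂.mpr ⟨γ, hγ, hu⟩)

theorem stage_le_Wreg (β : Ordinal) : stage B F β ⊆ Wreg B F :=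
  lfpApprox_le_of_mem_fixedPoints (Theta B F)
    (OrderHom.map_lfp (Theta B F)) bot_le β

theorem Wreg_eq_stage : Wreg B F = stage B F (Cardinal.ord <| Order.succ (Cardinal.mk (Set U))) :=
  (lfpApprox_ord_eq_lfp (Theta B F)).symm

/-- Rank of a vertex: least stage `γ` with `u ∈ Θ(stage γ)`. -/
noncomputable def rho (u : U) : Ordinal := sInf {γ | u ∈ Theta B F (stage B F γ)}

theorem rho_spec {u : U} (h : u ∈ Wreg B F) : u ∈ Theta B F (stage B F (rho B F u)) := by
  have : ∃ γ, u ∈ Theta B F (stage B F γ) := by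
    rw [Wreg_eq_stage, mem_stage_iff] at h
    obtain ⟨γ, _, hγ⟩ := h
    exact ⟨γ, hγ⟩
  exact csInf_mem this

theorem rho_le {u : U} {γ : Ordinal} (h : u ∈ Theta B F (stage B F γ)) : rho B F u ≤ γ :=
  csInf_le (OrderBot.bddBelow _) h

theorem not_mem_stage_rho {u : U} (h : u ∈ Wreg B F) : u ∉ stage B F (rho B F u) := by
  intro hu
  rw [mem_stage_iff] at hu
  obtain ⟨γ, hγ, hγ'⟩ := hu
  exact absurd (rho_le B F hγ') (not_le.mpr hγ)

/-- The bound chosen at `u`. -/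
noncomputable def NN (u : U) : ℕ := sInf {N | u ∈ Z B F N (stage B F (rho B F u))}

theorem NN_spec {u : U} (h : u ∈ Wreg B F) :
    u ∈ Z B F (NN B F u) (stage B F (rho B F u)) := by
  have h' := rho_spec B F h
  rw [show Theta B F (stage B F (rho B F u)) = ⋃ N, Z B F N (stage B F (rho B F u)) from rfl,
    Set.mem_iUnion] at h'
  exact Nat.sInf_mem h'

theorem NN_le {u : U} {N : ℕ} (h : u ∈ Z B F N (stage B F (rho B F u))) : NN B F u ≤ N :=
  Nat.sInf_le h

/-- The attractor target at `u`. -/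
noncomputable def TT (u : U) : Set U :=
  (F ∩ Pre B (Z B F (NN B F u) (stage B F (rho B F u)))) ∪ stage B F (rho B F u)

/-- The attractor rank at `u`. -/
noncomputable def rr (u : U) : ℕ := sInf {k | u ∈ AttrE B k (TT B F u)}

theorem rr_spec {u : U} (h : u ∈ Wreg B F) : u ∈ AttrE B (rr B F u) (TT B F u) := by
  have h' := NN_spec B F h
  rw [Z_eq] at h'
  have h2 : rr B F u ∈ {k | u ∈ AttrE B k (TT B F u)} := by
    rw [rr]
    refine Nat.sInf_mem ⟨NN B F u, ?_⟩
    show u ∈ AttrE B (NN B F u) (TT B F u)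
    rw [TT]
    exact h'
  exact h2

theorem rr_le_NN {u : U} (h : u ∈ Wreg B F) : rr B F u ≤ NN B F u := by
  have h' := NN_spec B F h
  rw [Z_eq] at h'
  exact Nat.sInf_le h'

theorem rr_min {u : U} {k : ℕ} (h : u ∈ AttrE B k (TT B F u)) : rr B F u ≤ k :=
  Nat.sInf_le h

/-- The index of the attractor set that successors should be in. -/
noncomputable def mIdx (u : U) : ℕ := if rr B F u = 0 then NN B F u else rr B F u - 1

theorem mIdx_le_NN {u : U} (h : u ∈ Wreg B F) : mIdx B F u ≤ NN B F u := by
  rw [mIdx]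
  split
  · exact le_rfl
  · exact le_trans (Nat.sub_le _ _) (rr_le_NN B F h)

theorem rr_zero_cases {u : U} (h : u ∈ Wreg B F) (h0 : rr B F u = 0) :
    u ∈ F ∩ Pre B (Z B F (NN B F u) (stage B F (rho B F u))) := by
  have := rr_spec B F h
  rw [h0] at this
  rcases this with hF | hX
  · exact hF
  · exact absurd hX (not_mem_stage_rho B F h)

theorem mem_F_of_rr_zero {u : U} (h : u ∈ Wreg B F) (h0 : rr B F u = 0) : u ∈ F :=
  (rr_zero_cases B F h h0).1

/-- Eve has a good move. -/
theorem exists_good {u : U} (h : u ∈ Wreg B F) (he : u ∈ B.eve) :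
    ∃ w, B.edge u w ∧ w ∈ AttrE B (mIdx B F u) (TT B F u) := by
  rcases Nat.eq_zero_or_pos (rr B F u) with h0 | hpos
  · have hu := rr_zero_cases B F h h0
    rcases hu.2 with ⟨_, w, hw, hwZ⟩ | ⟨hne, _⟩
    · refine ⟨w, hw, ?_⟩
      rw [mIdx, if_pos h0]
      rw [Z_eq] at hwZ
      exact hwZ
    · exact absurd he hne
  · obtain ⟨m, hm⟩ : ∃ m, rr B F u = m + 1 := ⟨rr B F u - 1, by omega⟩
    have hu := rr_spec B F h
    rw [hm] at hu
    have hnot : u ∉ AttrE B m (TT B F u) := fun hmem => by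
      have := rr_min B F hmem; omega
    rcases hu with hA | hP
    · exact absurd hA hnot
    · rcases hP with ⟨_, w, hw, hwA⟩ | ⟨hne, _⟩
      · refine ⟨w, hw, ?_⟩
        rw [mIdx, if_neg (by omega)]
        rw [hm]
        simpa using hwA
      · exact absurd he hne

/-- All of Adam's moves are good. -/
theorem all_good {u : U} (h : u ∈ Wreg B F) (he : u ∉ B.eve) :
    ∀ w, B.edge u w → w ∈ AttrE B (mIdx B F u) (TT B F u) := by
  intro w hw
  rcases Nat.eq_zero_or_pos (rr B F u) with h0 | hpos
  · have hu := rr_zero_cases B F h h0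
    rcases hu.2 with ⟨hee, _⟩ | ⟨_, hall⟩
    · exact absurd hee he
    · rw [mIdx, if_pos h0]
      have := hall w hw
      rw [Z_eq] at this
      exact this
  · obtain ⟨m, hm⟩ : ∃ m, rr B F u = m + 1 := ⟨rr B F u - 1, by omega⟩
    have hu := rr_spec B F h
    rw [hm] at hu
    have hnot : u ∉ AttrE B m (TT B F u) := fun hmem => by
      have := rr_min B F hmem; omega
    rcases hu with hA | hP
    · exact absurd hA hnot
    · rcases hP with ⟨hee, _⟩ | ⟨_, hall⟩
      · exact absurd hee he
      · rw [mIdx, if_neg (by omega), hm]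
        simpa using hall w hw

/-- The step facts: lexicographic decrease of `(rho, NN, rr)`. -/
theorem step_facts {u w : U} (h : u ∈ Wreg B F)
    (hw : w ∈ AttrE B (mIdx B F u) (TT B F u)) :
    w ∈ Wreg B F ∧ rho B F w ≤ rho B F u ∧
      (rho B F w = rho B F u → NN B F w ≤ NN B F u ∧
        (NN B F w = NN B F u → rr B F w ≤ mIdx B F u)) := by
  have hwZ : w ∈ Z B F (NN B F u) (stage B F (rho B F u)) := by
    rw [Z_eq]
    exact attrE_idx_mono B (mIdx_le_NN B F h) _ hw
  have hwT : w ∈ Theta B F (stage B F (rho B F u)) := Z_le_Theta B F _ _ hwZ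
  have hwW : w ∈ Wreg B F := by
    have : Theta B F (stage B F (rho B F u)) ⊆ Theta B F (Wreg B F) :=
      (Theta B F).monotone (stage_le_Wreg B F _)
    rw [theta_Wreg] at this
    exact this hwT
  refine ⟨hwW, rho_le B F hwT, fun hrho => ?_⟩
  have hNle : NN B F w ≤ NN B F u := by
    apply NN_le
    rw [hrho]
    exact hwZ
  refine ⟨hNle, fun hNN => ?_⟩
  apply rr_min
  have hTT : TT B F w = TT B F u := by
    rw [TT, TT, hrho, hNN]
  rw [hTT]
  exact hw

end Buchi

end BndAux

namespace BndAux

open GameDefs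

section Buchi2

variable {U : Type} (B : Arena U) (F : Set U)

open Classical in
/-- The move function of the positional strategy. -/
noncomputable def stratMove (v : U) : U :=
  if h : v ∈ B.eve ∧ v ∈ Wreg B F then (exists_good B F h.2 h.1).choose
  else (B.succ v).choose

/-- The positional strategy for the per-play bounded Büchi game. -/
noncomputable def strat : PosStrategy B where
  move := stratMove B F
  legal := by
    intro v hv
    rw [stratMove]
    split
    · next h => exact (exists_good B F h.2 h.1).choose_spec.1
    · exact (B.succ v).choose_spec

theorem strat_good {v : U} (he : v ∈ B.eve) (hW : v ∈ Wreg B F) :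
    (strat B F).move v ∈ AttrE B (mIdx B F v) (TT B F v) := by
  show stratMove B F v ∈ _
  rw [stratMove]
  split
  · next h => exact (exists_good B F h.2 h.1).choose_spec.2
  · next h => exact absurd ⟨he, hW⟩ h

theorem sound : ∀ v ∈ Wreg B F, PosWinsFrom B (strat B F) (OmegaB F) v := by
  intro v hv π hplay h0 hcons
  -- every next vertex is in the relevant attractor set
  have hstep : ∀ k, π k ∈ Wreg B F →
      π (k + 1) ∈ AttrE B (mIdx B F (π k)) (TT B F (π k)) := by
    intro k hk
    by_cases he : π k ∈ B.eve
    · rw [hcons k he]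
      exact strat_good B F he hk
    · exact all_good B F hk he (π (k + 1)) (hplay k)
  have hW : ∀ k, π k ∈ Wreg B F := by
    intro k
    induction k with
    | zero => rw [h0]; exact hv
    | succ k ih => exact (step_facts B F ih (hstep k ih)).1
  -- rho is non-increasing, hence eventually constant
  obtain ⟨t0, ht0⟩ := ordinal_eventually_const (fun k => rho B F (π k))
    (fun k => (step_facts B F (hW k) (hstep k (hW k))).2.1)
  have hrhoeq : ∀ k, t0 ≤ k → rho B F (π (k + 1)) = rho B F (π k) := by
    intro k hk
    rw [ht0 (k+1) (by omega), ht0 k hk]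
  -- NN is non-increasing after t0, hence eventually constant
  obtain ⟨t1, ht1ge, ht1⟩ := nat_eventually_const (fun k => NN B F (π k)) t0
    (fun k hk => ((step_facts B F (hW k) (hstep k (hW k))).2.2 (hrhoeq k hk)).1)
  have hNNeq : ∀ k, t1 ≤ k → NN B F (π (k + 1)) = NN B F (π k) := by
    intro k hk
    rw [ht1 (k+1) (by omega), ht1 k hk]
  -- after t1, rr decreases until an F-visit
  have hrr : ∀ k, t1 ≤ k → rr B F (π k) ≠ 0 →
      rr B F (π (k + 1)) < rr B F (π k) := by
    intro k hk hne
    have hfacts := (step_facts B F (hW k) (hstep k (hW k))).2.2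
      (hrhoeq k (le_trans ht1ge hk))
    have := (hfacts.2 (hNNeq k hk))
    rw [mIdx, if_neg hne] at this
    omega
  have hFvisit : ∀ j k, t1 ≤ k → rr B F (π k) ≤ j → ∃ i ≤ j, π (k + i) ∈ F := by
    intro j
    induction j with
    | zero =>
      intro k hk hle
      exact ⟨0, le_rfl, mem_F_of_rr_zero B F (hW k) (Nat.le_zero.mp hle)⟩
    | succ j ih =>
      intro k hk hle
      by_cases h0 : rr B F (π k) = 0
      · exact ⟨0, Nat.zero_le _, mem_F_of_rr_zero B F (hW k) h0⟩
      · have := hrr k hk h0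
        obtain ⟨i, hi, hiF⟩ := ih (k + 1) (by omega) (by omega)
        exact ⟨i + 1, by omega, by rw [show k + (i+1) = k + 1 + i by omega]; exact hiF⟩
  -- the uniform bound
  refine ⟨t1 + NN B F (π t1), fun k => ?_⟩
  rw [distB_le_iff]
  by_cases hk : t1 ≤ k
  · obtain ⟨i, hi, hiF⟩ := hFvisit (rr B F (π k)) k hk le_rfl
    refine ⟨i, ?_, hiF⟩
    have h1 : rr B F (π k) ≤ NN B F (π k) := rr_le_NN B F (hW k)
    have h2 : NN B F (π k) = NN B F (π t1) := ht1 k hk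
    omega
  · obtain ⟨i, hi, hiF⟩ := hFvisit (rr B F (π t1)) t1 le_rfl le_rfl
    refine ⟨(t1 - k) + i, ?_, ?_⟩
    · have h1 : rr B F (π t1) ≤ NN B F (π t1) := rr_le_NN B F (hW t1)
      omega
    · rw [show k + ((t1 - k) + i) = t1 + i by omega]
      exact hiF

end Buchi2

end BndAux

namespace BndAux

open GameDefs

section Buchi3

variable {U : Type} (B : Arena U) (F : Set U)

theorem hist_congr {π π' : ℕ → U} (k : ℕ) (h : ∀ i, i < k → π' i = π i) :
    hist π' k = hist π k := by
  apply List.map_congr_left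
  intro a ha
  exact h a (List.mem_range.mp ha)

/-- A finite partial play consistent with `σ`. -/
def PPlay (σ : EveStrategy B) (k : ℕ) (π : ℕ → U) : Prop :=
  (∀ i, i < k → B.edge (π i) (π (i + 1))) ∧
  (∀ i, i < k → π i ∈ B.eve → π (i + 1) = σ.move (hist π i) (π i))

/-- Extendability with a long `F`-free window, ending outside the winning region. -/
def Ext (σ : EveStrategy B) (N k : ℕ) (π : ℕ → U) : Prop :=
  ∃ k', ∃ π' : ℕ → U, k + N ≤ k' ∧ (∀ i, i ≤ k → π' i = π i) ∧ PPlay B σ k' π' ∧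
    (∃ a, k ≤ a ∧ a + N ≤ k' ∧ ∀ i, a ≤ i → i < a + N → π' i ∉ F) ∧
    π' k' ∉ Wreg B F

/-- Vertices from which Adam can spoil: force an `F`-free window of length `N`. -/
def CanSpoil (σ : EveStrategy B) (N : ℕ) : Set U :=
  {u | ∀ k π, π k = u → PPlay B σ k π → Ext B F σ N k π}

theorem pplay_zero (σ : EveStrategy B) (π : ℕ → U) : PPlay B σ 0 π :=
  ⟨fun i hi => absurd hi (Nat.not_lt_zero i), fun i hi => absurd hi (Nat.not_lt_zero i)⟩

theorem pplay_extend (σ : EveStrategy B) {k : ℕ} {π : ℕ → U} (h : PPlay B σ k π) {w : U}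
    (hedge : B.edge (π k) w) (hcons : π k ∈ B.eve → w = σ.move (hist π k) (π k)) :
    PPlay B σ (k + 1) (Function.update π (k + 1) w) ∧
      (∀ i, i ≤ k → Function.update π (k + 1) w i = π i) ∧
      Function.update π (k + 1) w (k + 1) = w := by
  have hag : ∀ i, i ≤ k → Function.update π (k + 1) w i = π i := by
    intro i hi
    have hne : i ≠ k + 1 := by omega
    exact Function.update_of_ne hne w π
  have hw : Function.update π (k + 1) w (k + 1) = w := Function.update_self _ _ _
  refine ⟨⟨?_, ?_⟩, hag, hw⟩
  · intro i hi
    rcases Nat.lt_or_ge i k with hik | hik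
    · rw [hag i (by omega), hag (i+1) (by omega)]
      exact h.1 i hik
    · have : i = k := by omega
      subst this
      rw [hag i le_rfl, hw]
      exact hedge
  · intro i hi hev
    have hh : hist (Function.update π (k + 1) w) i = hist π i :=
      hist_congr i (fun j hj => hag j (by omega))
    rcases Nat.lt_or_ge i k with hik | hik
    · rw [hag i (by omega)] at hev ⊢
      rw [hag (i+1) (by omega), hh]
      exact h.2 i hik hev
    · have : i = k := by omega
      subst this
      rw [hag i le_rfl] at hev ⊢
      rw [hw, hh]
      exact hcons hev

/-- The key avoidance lemma: outside the `n`-step attractor of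
`(F ∩ Pre (CanSpoil)ᶜ) ∪ Wreg`, Adam can either spoil or walk `n` `F`-free steps. -/
theorem avoid (σ : EveStrategy B) (N : ℕ) :
    ∀ n u, u ∉ AttrE B n ((F ∩ Pre B (CanSpoil B F σ N)ᶜ) ∪ Wreg B F) →
    ∀ k π, π k = u → PPlay B σ k π →
    Ext B F σ N k π ∨
      (∃ π' : ℕ → U, (∀ i, i ≤ k → π' i = π i) ∧ PPlay B σ (k + n) π' ∧
        (∀ i, k ≤ i → i ≤ k + n → π' i ∉ F) ∧
        π' (k + n) ∉ ((F ∩ Pre B (CanSpoil B F σ N)ᶜ) ∪ Wreg B F)) := by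
  set G := CanSpoil B F σ N with hG
  set T := (F ∩ Pre B Gᶜ) ∪ Wreg B F with hT
  -- the F-case, usable at every level
  have Fcase : ∀ u, u ∉ T → u ∈ F → ∀ k π, π k = u → PPlay B σ k π → Ext B F σ N k π := by
    intro u huT huF k π hk hP
    subst hk
    have hnP : π k ∉ Pre B Gᶜ := by
      intro hP'
      exact huT (Or.inl ⟨huF, hP'⟩)
    -- find a successor in G compatible with σ
    have hsucc : ∃ w, B.edge (π k) w ∧ (π k ∈ B.eve → w = σ.move (hist π k) (π k)) ∧ w ∈ G := by
      by_cases hev : π k ∈ B.eve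
      · refine ⟨σ.move (hist π k) (π k), σ.legal _ _ hev, fun _ => rfl, ?_⟩
        by_contra hwG
        exact hnP (Or.inl ⟨hev, σ.move (hist π k) (π k), σ.legal _ _ hev, hwG⟩)
      · have h2 : ¬ (π k ∉ B.eve ∧ ∀ w, B.edge (π k) w → w ∈ Gᶜ) := fun h => hnP (Or.inr h)
        push_neg at h2
        obtain ⟨w, hw, hwG⟩ := h2 hev
        exact ⟨w, hw, fun h => absurd h hev, by simpa using hwG⟩
    obtain ⟨w, hedge, hcons, hwG⟩ := hsucc
    obtain ⟨hP1, hag, hw1⟩ := pplay_extend B σ hP hedge hcons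
    have hext : Ext B F σ N (k + 1) (Function.update π (k + 1) w) :=
      hwG (k + 1) _ hw1 hP1
    obtain ⟨k', π', h1, h2, h3, h4, h5⟩ := hext
    refine ⟨k', π', by omega, ?_, h3, ?_, h5⟩
    · intro i hi
      rw [h2 i (by omega), hag i hi]
    · obtain ⟨a, ha1, ha2, ha3⟩ := h4
      exact ⟨a, by omega, ha2, ha3⟩
  intro n
  induction n with
  | zero =>
    intro u hu k π hk hP
    subst hk
    have huT : π k ∉ T := hu
    by_cases hF : π k ∈ F
    · exact Or.inl (Fcase (π k) huT hF k π rfl hP)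
    · refine Or.inr ⟨π, fun i _ => rfl, by simpa using hP, ?_, by simpa using huT⟩
      intro i hi1 hi2
      have : i = k := by omega
      subst this
      exact hF
  | succ n ih =>
    intro u hu k π hk hP
    subst hk
    have huT : π k ∉ T := fun h => hu (subset_attrE B (n+1) T h)
    by_cases hF : π k ∈ F
    · exact Or.inl (Fcase (π k) huT hF k π rfl hP)
    · have hu' : π k ∉ AttrE B n T ∧ π k ∉ Pre B (AttrE B n T) := by
        constructor
        · intro h; exact hu (Or.inl h)
        · intro h; exact hu (Or.inr h)
      -- find a successor avoiding AttrE n T, compatible with σ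
      have hsucc : ∃ w, B.edge (π k) w ∧ (π k ∈ B.eve → w = σ.move (hist π k) (π k)) ∧
          w ∉ AttrE B n T := by
        by_cases hev : π k ∈ B.eve
        · refine ⟨σ.move (hist π k) (π k), σ.legal _ _ hev, fun _ => rfl, ?_⟩
          intro hmem
          exact hu'.2 (Or.inl ⟨hev, σ.move (hist π k) (π k), σ.legal _ _ hev, hmem⟩)
        · have h2 : ¬ (π k ∉ B.eve ∧ ∀ w, B.edge (π k) w → w ∈ AttrE B n T) :=
            fun h => hu'.2 (Or.inr h)
          push_neg at h2
          obtain ⟨w, hw, hwA⟩ := h2 hev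
          exact ⟨w, hw, fun h => absurd h hev, hwA⟩
      obtain ⟨w, hedge, hcons, hwA⟩ := hsucc
      obtain ⟨hP1, hag, hw1⟩ := pplay_extend B σ hP hedge hcons
      rcases ih w hwA (k + 1) _ hw1 hP1 with hext | ⟨π', hag', hP', hFfree, hend⟩
      · obtain ⟨k', π', h1, h2, h3, h4, h5⟩ := hext
        refine Or.inl ⟨k', π', by omega, ?_, h3, ?_, h5⟩
        · intro i hi
          rw [h2 i (by omega), hag i hi]
        · obtain ⟨a, ha1, ha2, ha3⟩ := h4
          exact ⟨a, by omega, ha2, ha3⟩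
      · refine Or.inr ⟨π', ?_, ?_, ?_, ?_⟩
        · intro i hi
          rw [hag' i (by omega), hag i hi]
        · rw [show k + (n + 1) = k + 1 + n by omega]
          exact hP'
        · intro i hi1 hi2
          rcases Nat.lt_or_ge i (k + 1) with hik | hik
          · have : i = k := by omega
            subst this
            rw [hag' i (by omega), hag i le_rfl]
            exact hF
          · exact hFfree i hik (by omega)
        · rw [show k + (n + 1) = k + 1 + n by omega]
          exact hend

theorem spoil_mem (σ : EveStrategy B) (N : ℕ) :
    ∀ u, u ∉ Wreg B F → u ∈ CanSpoil B F σ N := by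
  have hpost : (CanSpoil B F σ N)ᶜ ≤ Phi B F N (Wreg B F) (CanSpoil B F σ N)ᶜ := by
    intro u hu
    by_contra hA
    apply hu
    intro k π hk hP
    rcases avoid B F σ N N u hA k π hk hP with hext | ⟨π', hag, hP', hFfree, hend⟩
    · exact hext
    · refine ⟨k + N, π', le_rfl, hag, hP', ⟨k, le_rfl, le_rfl, ?_⟩, ?_⟩
      · intro i hi1 hi2
        exact hFfree i hi1 (by omega)
      · intro h
        exact hend (Or.inr h)
  have hsub : (CanSpoil B F σ N)ᶜ ⊆ Z B F N (Wreg B F) := OrderHom.le_gfp _ hpost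
  intro u hu
  by_contra hns
  apply hu
  have h1 : u ∈ Z B F N (Wreg B F) := hsub hns
  have h2 : u ∈ Theta B F (Wreg B F) := Z_le_Theta B F N _ h1
  rw [theta_Wreg] at h2
  exact h2

end Buchi3

end BndAux

namespace BndAux

open GameDefs

section Buchi4

variable {U : Type} (B : Arena U) (F : Set U) (σ : EveStrategy B) (v : U)

/-- Invariant of the spoiling construction. -/
def Inv (s : ℕ × (ℕ → U)) : Prop :=
  s.2 0 = v ∧ PPlay B σ s.1 s.2 ∧ s.2 s.1 ∉ Wreg B F

/-- One round of the spoiling construction. -/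
noncomputable def stepR (N : ℕ) (s : {s : ℕ × (ℕ → U) // Inv B F σ v s}) :
    {t : ℕ × (ℕ → U) // Inv B F σ v t ∧ s.1.1 + (N + 1) ≤ t.1 ∧
      (∀ i, i ≤ s.1.1 → t.2 i = s.1.2 i) ∧
      ∃ a, s.1.1 ≤ a ∧ a + (N + 1) ≤ t.1 ∧ ∀ i, a ≤ i → i < a + (N + 1) → t.2 i ∉ F} := by
  have hcs : s.1.2 s.1.1 ∈ CanSpoil B F σ (N + 1) :=
    spoil_mem B F σ (N + 1) _ s.2.2.2
  have hext : Ext B F σ (N + 1) s.1.1 s.1.2 := hcs s.1.1 s.1.2 rfl s.2.2.1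
  refine ⟨(hext.choose, hext.choose_spec.choose), ?_⟩
  obtain ⟨h1, h2, h3, h4, h5⟩ := hext.choose_spec.choose_spec
  refine ⟨⟨?_, h3, h5⟩, h1, h2, h4⟩
  show hext.choose_spec.choose 0 = v
  rw [h2 0 (Nat.zero_le _)]
  exact s.2.1

variable (hv : v ∉ Wreg B F)

/-- The rounds of the spoiling construction. -/
noncomputable def rounds : (N : ℕ) → {s : ℕ × (ℕ → U) // Inv B F σ v s}
  | 0 => ⟨(0, fun _ => v), rfl, pplay_zero B σ _, hv⟩
  | N + 1 => ⟨(stepR B F σ v N (rounds N)).1, (stepR B F σ v N (rounds N)).2.1⟩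

/-- The spoiling play. -/
noncomputable def spoilPlay : ℕ → U := fun j => (rounds B F σ v hv j).1.2 j

theorem rounds_facts (N : ℕ) :
    (rounds B F σ v hv N).1.1 + (N + 1) ≤ (rounds B F σ v hv (N+1)).1.1 ∧
    (∀ i, i ≤ (rounds B F σ v hv N).1.1 →
      (rounds B F σ v hv (N+1)).1.2 i = (rounds B F σ v hv N).1.2 i) ∧
    ∃ a, (rounds B F σ v hv N).1.1 ≤ a ∧ a + (N + 1) ≤ (rounds B F σ v hv (N+1)).1.1 ∧
      ∀ i, a ≤ i → i < a + (N + 1) → (rounds B F σ v hv (N+1)).1.2 i ∉ F :=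
  (stepR B F σ v N (rounds B F σ v hv N)).2.2

theorem rounds_k_ge (N : ℕ) : N ≤ (rounds B F σ v hv N).1.1 := by
  induction N with
  | zero => exact Nat.zero_le _
  | succ N ih =>
    have := (rounds_facts B F σ v hv N).1
    omega

theorem rounds_k_mono {N M : ℕ} (h : N ≤ M) :
    (rounds B F σ v hv N).1.1 ≤ (rounds B F σ v hv M).1.1 := by
  induction h with
  | refl => exact le_rfl
  | @step M h ih =>
    show (rounds B F σ v hv N).1.1 ≤ (rounds B F σ v hv (M+1)).1.1
    have := (rounds_facts B F σ v hv M).1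
    omega

theorem rounds_agree {N M : ℕ} (h : N ≤ M) :
    ∀ i, i ≤ (rounds B F σ v hv N).1.1 →
      (rounds B F σ v hv M).1.2 i = (rounds B F σ v hv N).1.2 i := by
  induction h with
  | refl => intro i _; rfl
  | @step M h ih =>
    intro i hi
    rw [(rounds_facts B F σ v hv M).2.1 i
      (le_trans hi (rounds_k_mono B F σ v hv h)), ih i hi]

theorem spoilPlay_eq {M j : ℕ} (h : j ≤ (rounds B F σ v hv M).1.1) :
    spoilPlay B F σ v hv j = (rounds B F σ v hv M).1.2 j := by
  rcases le_total j M with hjM | hMj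
  · rw [spoilPlay, rounds_agree B F σ v hv hjM j (rounds_k_ge B F σ v hv j)]
  · rw [spoilPlay, rounds_agree B F σ v hv hMj j h]

theorem spoilPlay_isPlay : IsPlay B (spoilPlay B F σ v hv) := by
  intro j
  have h1 : j + 1 ≤ (rounds B F σ v hv (j+1)).1.1 := rounds_k_ge B F σ v hv (j+1)
  rw [spoilPlay_eq B F σ v hv (show j ≤ (rounds B F σ v hv (j+1)).1.1 by omega),
    spoilPlay_eq B F σ v hv h1]
  exact (rounds B F σ v hv (j+1)).2.2.1.1 j (by omega)

theorem spoilPlay_zero : spoilPlay B F σ v hv 0 = v := by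
  rw [spoilPlay]
  exact (rounds B F σ v hv 0).2.1

theorem spoilPlay_consistent : EveConsistent B σ (spoilPlay B F σ v hv) := by
  intro j hj
  have h1 : j + 1 ≤ (rounds B F σ v hv (j+1)).1.1 := rounds_k_ge B F σ v hv (j+1)
  have hhist : hist (spoilPlay B F σ v hv) j = hist ((rounds B F σ v hv (j+1)).1.2) j := by
    apply hist_congr
    intro i hi
    exact spoilPlay_eq B F σ v hv (by omega)
  have hjj : spoilPlay B F σ v hv j = (rounds B F σ v hv (j+1)).1.2 j :=
    spoilPlay_eq B F σ v hv (by omega)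
  rw [spoilPlay_eq B F σ v hv h1, hhist, hjj]
  exact (rounds B F σ v hv (j+1)).2.2.1.2 j (by omega) (by rw [← hjj]; exact hj)

theorem spoilPlay_windows (N : ℕ) :
    ∃ a, ∀ i, a ≤ i → i < a + (N + 1) → spoilPlay B F σ v hv i ∉ F := by
  obtain ⟨a, ha1, ha2, ha3⟩ := (rounds_facts B F σ v hv N).2.2
  refine ⟨a, fun i hi1 hi2 => ?_⟩
  rw [spoilPlay_eq B F σ v hv (show i ≤ (rounds B F σ v hv (N+1)).1.1 by omega)]
  exact ha3 i hi1 hi2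

theorem spoilPlay_not_omega : spoilPlay B F σ v hv ∉ OmegaB F := by
  rintro ⟨N, hN⟩
  obtain ⟨a, ha⟩ := spoilPlay_windows B F σ v hv N
  have := hN a
  rw [distB_le_iff] at this
  obtain ⟨j, hj, hjF⟩ := this
  exact ha (a + j) (by omega) (by omega) hjF

/-- Completeness: Eve cannot win from outside `Wreg`. -/
theorem complete (σ' : EveStrategy B) {u : U} (hu : u ∉ Wreg B F) :
    ¬ EveWinsFrom B σ' (OmegaB F) u := by
  intro hwin
  exact spoilPlay_not_omega B F σ' u hu
    (hwin _ (spoilPlay_isPlay B F σ' u hu) (spoilPlay_zero B F σ' u hu)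
      (spoilPlay_consistent B F σ' u hu))

/-- The abstract theorem: a single positional strategy wins the per-play bounded
Büchi condition from every vertex of Eve's winning region. -/
theorem buchi_main :
    ∃ σ : PosStrategy B, ∀ u ∈ WE B (OmegaB F), PosWinsFrom B σ (OmegaB F) u := by
  refine ⟨strat B F, fun u hu => ?_⟩
  apply sound B F
  by_contra hns
  obtain ⟨σ', hσ'⟩ := hu
  exact complete B F σ' hns hσ'

end Buchi4

end BndAux

namespace BndAux

open GameDefs

section Parity

variable {V : Type} (d : ℕ) (c : V → ℕ)

/-- The odd colors. -/
def OddC : Type := {m : ℕ // m ∈ (Finset.range (d + 1)).filter (fun m => Odd m)}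

instance : Fintype (OddC d) := by
  rw [OddC]; infer_instance

theorem oddC_mem {x : ℕ} (hx : Odd x) (hxd : x ≤ d) :
    x ∈ (Finset.range (d + 1)).filter (fun m => Odd m) :=
  Finset.mem_filter.mpr ⟨Finset.mem_range.mpr (by omega), hx⟩

theorem oddC_odd (p : OddC d) : Odd p.1 := (Finset.mem_filter.mp p.2).2

theorem oddC_le (p : OddC d) : p.1 ≤ d := by
  have := Finset.mem_range.mp (Finset.mem_filter.mp p.2).1
  omega

variable (hc : ∀ v, c v ≤ d)

open Classical in
/-- Memory update: keep track of the minimal pending odd color. -/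
noncomputable def upd (m : Option (OddC d)) (v : V) (_ : V) : Option (OddC d) :=
  if hx : Odd (c v) then
    some (m.elim ⟨c v, oddC_mem d hx (hc v)⟩
      (fun p => if c v ≤ p.1 then ⟨c v, oddC_mem d hx (hc v)⟩ else p))
  else
    m.elim none (fun p => if c v ≤ p.1 then none else some p)

theorem upd_odd_none {v w : V} (hx : Odd (c v)) :
    upd d c hc none v w = some ⟨c v, oddC_mem d hx (hc v)⟩ := by
  rw [upd, dif_pos hx]
  rfl

theorem upd_odd_some_le {v w : V} (hx : Odd (c v)) {q : OddC d} (hle : c v ≤ q.1) :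
    upd d c hc (some q) v w = some ⟨c v, oddC_mem d hx (hc v)⟩ := by
  rw [upd, dif_pos hx]
  simp only [Option.elim]
  exact congrArg some (if_pos hle)

theorem upd_odd_some_gt {v w : V} (hx : Odd (c v)) {q : OddC d} (hle : ¬ c v ≤ q.1) :
    upd d c hc (some q) v w = some q := by
  rw [upd, dif_pos hx]
  simp only [Option.elim]
  exact congrArg some (if_neg hle)

theorem upd_even_none {v w : V} (hx : ¬ Odd (c v)) :
    upd d c hc none v w = none := by
  rw [upd, dif_neg hx]
  rfl

theorem upd_even_some_le {v w : V} (hx : ¬ Odd (c v)) {q : OddC d} (hle : c v ≤ q.1) :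
    upd d c hc (some q) v w = none := by
  rw [upd, dif_neg hx]
  simp only [Option.elim]
  rw [if_pos hle]

theorem upd_even_some_gt {v w : V} (hx : ¬ Odd (c v)) {q : OddC d} (hle : ¬ c v ≤ q.1) :
    upd d c hc (some q) v w = some q := by
  rw [upd, dif_neg hx]
  simp only [Option.elim]
  rw [if_neg hle]

/-- The memory structure. -/
noncomputable def MemS : Memory V := ⟨Option (OddC d), none, upd d c hc⟩

/-- The target set: reset states. -/
def Fset : Set (V × Option (OddC d)) :=
  {p | Even (c p.1) ∧ ∀ q : OddC d, p.2 = some q → c p.1 ≤ q.1}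

/-- The lifted play. -/
noncomputable def liftP (π : ℕ → V) : ℕ → V × Option (OddC d) :=
  fun k => (π k, memRun (MemS d c hc) π k)

theorem memRun_zero (π : ℕ → V) : memRun (MemS d c hc) π 0 = none := rfl

theorem memRun_succ (π : ℕ → V) (k : ℕ) :
    memRun (MemS d c hc) π (k + 1) =
      upd d c hc (memRun (MemS d c hc) π k) (π k) (π (k + 1)) := rfl

/-- Invariant: a pending odd color bounds the memory from above. -/
theorem invA (π : ℕ → V) (j : ℕ) (hodd : Odd (c (π j))) :
    ∀ k, j < k → (∀ i, j < i → i < k → ¬(Even (c (π i)) ∧ c (π i) ≤ c (π j))) →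
    ∃ p : OddC d, memRun (MemS d c hc) π k = some p ∧ p.1 ≤ c (π j) := by
  intro k
  induction k with
  | zero => omega
  | succ k ih =>
    intro hjk hno
    rcases Nat.lt_or_ge j k with hjk' | hjk'
    · obtain ⟨p, hp, hple⟩ := ih hjk' (fun i h1 h2 => hno i h1 (by omega))
      rw [memRun_succ, hp]
      by_cases hx : Odd (c (π k))
      · by_cases hle : c (π k) ≤ p.1
        · rw [upd_odd_some_le d c hc hx hle]
          exact ⟨_, rfl, by simpa using le_trans hle hple⟩
        · rw [upd_odd_some_gt d c hc hx hle]
          exact ⟨p, rfl, hple⟩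
      · have heven : Even (c (π k)) := Nat.not_odd_iff_even.mp hx
        have hgt : ¬ c (π k) ≤ c (π j) := fun h => hno k (by omega) (by omega) ⟨heven, h⟩
        have hgt' : ¬ c (π k) ≤ p.1 := fun h => hgt (le_trans h hple)
        rw [upd_even_some_gt d c hc hx hgt']
        exact ⟨p, rfl, hple⟩
    · have hjk'' : j = k := by omega
      subst hjk''
      rw [memRun_succ]
      rcases hm : memRun (MemS d c hc) π j with _ | q
      · rw [upd_odd_none d c hc hodd]
        exact ⟨_, rfl, le_rfl⟩
      · by_cases hle : c (π j) ≤ q.1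
        · rw [upd_odd_some_le d c hc hodd hle]
          exact ⟨_, rfl, le_rfl⟩
        · rw [upd_odd_some_gt d c hc hodd hle]
          exact ⟨q, rfl, by omega⟩

/-- If the lifted play has uniformly bounded distance to resets, the original play
has uniformly bounded parity distances. -/
theorem lemA (π : ℕ → V) (N : ℕ)
    (h : ∀ k, distB (liftP d c hc π) (Fset d c) k ≤ (N : ℕ∞)) :
    ∀ k, distC π c k ≤ ((N + 1 : ℕ) : ℕ∞) := by
  intro k
  rw [distC_le_iff]
  by_cases hpar : Even (c (π k))
  · exact ⟨0, Nat.zero_le _, by simpa using hpar⟩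
  have hodd : Odd (c (π k)) := Nat.not_even_iff_odd.mp hpar
  have hB := h (k + 1)
  rw [distB_le_iff] at hB
  obtain ⟨j, hjN, hjF⟩ := hB
  by_cases hQ : ∃ i, k < i ∧ i ≤ k + 1 + j ∧ Even (c (π i)) ∧ c (π i) ≤ c (π k)
  · obtain ⟨i, hi1, hi2, hi3, hi4⟩ := hQ
    refine ⟨i - k, by omega, ?_⟩
    rw [show k + (i - k) = i by omega]
    exact ⟨hi3, hi4⟩
  · exfalso
    push_neg at hQ
    obtain ⟨p, hp, hple⟩ := invA d c hc π k hodd (k + 1 + j) (by omega)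
      (fun i h1 h2 hx => by have := hQ i h1 (by omega) hx.1; omega)
    obtain ⟨hev, hall⟩ := hjF
    have h1 := hQ (k + 1 + j) (by omega) le_rfl hev
    have h2 : c (π (k + 1 + j)) ≤ p.1 := hall p hp
    omega

/-- Origin invariant: a stored pending color was seen and never answered since. -/
theorem inv2 (π : ℕ → V) :
    ∀ k p, memRun (MemS d c hc) π k = some p →
    ∃ j, j < k ∧ c (π j) = p.1 ∧
      ∀ i, j < i → i < k → ¬(Even (c (π i)) ∧ c (π i) ≤ p.1) := by
  intro k
  induction k with
  | zero => intro p hp; simp [memRun_zero] at hp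
  | succ k ih =>
    intro p hp
    rw [memRun_succ] at hp
    by_cases hx : Odd (c (π k))
    · rcases hm : memRun (MemS d c hc) π k with _ | q
      · rw [hm, upd_odd_none d c hc hx] at hp
        obtain rfl := Option.some_injective _ hp
        exact ⟨k, by omega, rfl, fun i h1 h2 => by omega⟩
      · rw [hm] at hp
        by_cases hle : c (π k) ≤ q.1
        · rw [upd_odd_some_le d c hc hx hle] at hp
          obtain rfl := Option.some_injective _ hp
          exact ⟨k, by omega, rfl, fun i h1 h2 => by omega⟩
        · rw [upd_odd_some_gt d c hc hx hle] at hp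
          obtain rfl := Option.some_injective _ hp
          obtain ⟨j, hj1, hj2, hj3⟩ := ih q hm
          refine ⟨j, by omega, hj2, fun i h1 h2 => ?_⟩
          rcases Nat.lt_or_ge i k with hik | hik
          · exact hj3 i h1 hik
          · have : i = k := by omega
            subst this
            intro ⟨hev, _⟩
            exact (Nat.not_odd_iff_even.mpr hev) hx
    · rcases hm : memRun (MemS d c hc) π k with _ | q
      · rw [hm, upd_even_none d c hc hx] at hp
        simp at hp
      · rw [hm] at hp
        by_cases hle : c (π k) ≤ q.1
        · rw [upd_even_some_le d c hc hx hle] at hp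
          simp at hp
        · rw [upd_even_some_gt d c hc hx hle] at hp
          obtain rfl := Option.some_injective _ hp
          obtain ⟨j, hj1, hj2, hj3⟩ := ih q hm
          refine ⟨j, by omega, hj2, fun i h1 h2 => ?_⟩
          rcases Nat.lt_or_ge i k with hik | hik
          · exact hj3 i h1 hik
          · have : i = k := by omega
            subst this
            intro ⟨_, hle'⟩
            exact hle (by omega)

/-- Absent resets, the pending minimum does not increase. -/
theorem pend_mono (π : ℕ → V) (k : ℕ) (p : OddC d)
    (hm : memRun (MemS d c hc) π k = some p) :
    ∀ i, k ≤ i → (∀ t, k ≤ t → t < i → liftP d c hc π t ∉ Fset d c) →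
    ∃ q : OddC d, memRun (MemS d c hc) π i = some q ∧ q.1 ≤ p.1 := by
  intro i hi
  induction i, hi using Nat.le_induction with
  | base => exact fun _ => ⟨p, hm, le_rfl⟩
  | succ i hi ih =>
    intro hno
    obtain ⟨q, hq, hqle⟩ := ih (fun t h1 h2 => hno t h1 (by omega))
    rw [memRun_succ, hq]
    by_cases hx : Odd (c (π i))
    · by_cases hle : c (π i) ≤ q.1
      · rw [upd_odd_some_le d c hc hx hle]
        exact ⟨_, rfl, by simpa using le_trans hle hqle⟩
      · rw [upd_odd_some_gt d c hc hx hle]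
        exact ⟨q, rfl, hqle⟩
    · by_cases hle : c (π i) ≤ q.1
      · exfalso
        apply hno i hi (by omega)
        show Even (c (π i)) ∧ ∀ r : OddC d, memRun (MemS d c hc) π i = some r → c (π i) ≤ r.1
        refine ⟨Nat.not_odd_iff_even.mp hx, fun r hr => ?_⟩
        have hqr : q = r := by
          rw [hq] at hr
          exact Option.some_injective _ hr
        rw [← hqr]
        exact hle
      · rw [upd_even_some_gt d c hc hx hle]
        exact ⟨q, rfl, hqle⟩

end Parity

end BndAux

namespace BndAux

open GameDefs

section Parity2

variable {V : Type} (d : ℕ) (c : V → ℕ) (hc : ∀ v, c v ≤ d)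

/-- Resets occur within bounded time from any pending state. -/
theorem subL (π : ℕ → V) (N : ℕ) (hH : ∀ k, distC π c k ≤ (N : ℕ∞)) :
    ∀ n : ℕ, ∀ p : OddC d, p.1 ≤ n → ∀ k, memRun (MemS d c hc) π k = some p →
    ∃ i, k ≤ i ∧ i ≤ k + (n + 1) * (N + 1) ∧ liftP d c hc π i ∈ Fset d c := by
  intro n
  induction n using Nat.strong_induction_on with
  | _ n IH =>
    intro p hpn k hm
    obtain ⟨j, hjk, hjval, hnoans⟩ := inv2 d c hc π k p hm
    have hjodd : Odd (c (π j)) := by rw [hjval]; exact oddC_odd d p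
    have hdC := hH j
    rw [distC_le_iff] at hdC
    obtain ⟨t, htN, htev, htle⟩ := hdC
    have ht0 : t ≠ 0 := by
      intro h
      subst h
      simp at htev
      exact (Nat.not_odd_iff_even.mpr htev) hjodd
    set i0 := j + t with hi0
    have hi0k : k ≤ i0 := by
      by_contra hlt
      push_neg at hlt
      exact hnoans i0 (by omega) (by omega) ⟨htev, by rw [← hjval]; exact htle⟩
    have hi0N : i0 ≤ k + N := by omega
    by_cases hQ : ∃ i, k ≤ i ∧ i ≤ i0 ∧ liftP d c hc π i ∈ Fset d c
    · obtain ⟨i, h1, h2, h3⟩ := hQ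
      refine ⟨i, h1, ?_, h3⟩
      have : N + 1 ≤ (n + 1) * (N + 1) := Nat.le_mul_of_pos_left _ (by omega)
      omega
    · push_neg at hQ
      obtain ⟨q, hq, hqle⟩ := pend_mono d c hc π k p hm i0 hi0k
        (fun t' h1 h2 => hQ t' h1 (by omega))
      by_cases hle : c (π i0) ≤ q.1
      · exfalso
        apply hQ i0 hi0k le_rfl
        show Even (c (π i0)) ∧ ∀ r : OddC d, memRun (MemS d c hc) π i0 = some r →
          c (π i0) ≤ r.1
        refine ⟨htev, fun r hr => ?_⟩
        have hqr : q = r := by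
          rw [hq] at hr
          exact Option.some_injective _ hr
        rw [← hqr]
        exact hle
      · have hqlt : q.1 < p.1 := by
          have h1 : c (π i0) ≤ p.1 := by rw [← hjval]; exact htle
          omega
        obtain ⟨i, h1, h2, h3⟩ := IH q.1 (by omega) q le_rfl i0 hq
        refine ⟨i, by omega, ?_, h3⟩
        have hmul : (q.1 + 1 + 1) * (N + 1) ≤ (n + 1) * (N + 1) :=
          Nat.mul_le_mul_right _ (by omega)
        have hexp : (q.1 + 1 + 1) * (N + 1) = (q.1 + 1) * (N + 1) + (N + 1) := by ring
        omega

/-- If the original play has uniformly bounded parity distances, the lifted play has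
uniformly bounded distance to resets. -/
theorem lemB (π : ℕ → V) (N : ℕ) (hH : ∀ k, distC π c k ≤ (N : ℕ∞)) :
    ∀ k, distB (liftP d c hc π) (Fset d c) k ≤ (((d + 2) * (N + 1) + 1 : ℕ) : ℕ∞) := by
  intro k
  rw [distB_le_iff]
  rcases hm : memRun (MemS d c hc) π k with _ | p
  · by_cases hpar : Even (c (π k))
    · refine ⟨0, Nat.zero_le _, ?_⟩
      rw [show k + 0 = k from rfl]
      show Even (c (π k)) ∧ ∀ q : OddC d, memRun (MemS d c hc) π k = some q → c (π k) ≤ q.1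
      refine ⟨hpar, fun q hq => ?_⟩
      rw [hm] at hq
      simp at hq
    · have hodd : Odd (c (π k)) := Nat.not_even_iff_odd.mp hpar
      have hm1 : memRun (MemS d c hc) π (k + 1) =
          some ⟨c (π k), oddC_mem d hodd (hc (π k))⟩ := by
        rw [memRun_succ, hm, upd_odd_none d c hc hodd]
      obtain ⟨i, h1, h2, h3⟩ := subL d c hc π N hH d
        ⟨c (π k), oddC_mem d hodd (hc (π k))⟩ (hc (π k)) (k + 1) hm1
      refine ⟨i - k, ?_, ?_⟩
      · have hexp : (d + 2) * (N + 1) = (d + 1) * (N + 1) + (N + 1) := by ring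
        omega
      · rw [show k + (i - k) = i by omega]
        exact h3
  · obtain ⟨i, h1, h2, h3⟩ := subL d c hc π N hH d p (oddC_le d p) k hm
    refine ⟨i - k, ?_, ?_⟩
    · have hexp : (d + 2) * (N + 1) = (d + 1) * (N + 1) + (N + 1) := by ring
      omega
    · rw [show k + (i - k) = i by omega]
      exact h3

/-- Unfolding the bounded parity condition. -/
theorem bndParity_iff (π : ℕ → V) :
    π ∈ BndParity c ↔ ∃ N : ℕ, ∀ k, distC π c k ≤ (N : ℕ∞) := by
  constructor
  · intro h
    have hne : (⨆ k, distC π c k) ≠ ⊤ := ne_top_of_lt h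
    obtain ⟨N, hN⟩ := WithTop.ne_top_iff_exists.mp hne
    refine ⟨N, fun k => ?_⟩
    calc distC π c k ≤ ⨆ k, distC π c k := le_iSup (fun k => distC π c k) k
      _ = (N : ℕ∞) := hN.symm
  · rintro ⟨N, hN⟩
    calc (⨆ k, distC π c k) ≤ (N : ℕ∞) := iSup_le hN
      _ < ⊤ := WithTop.coe_lt_top N

/-- The play-level equivalence between the bounded parity condition and the
per-play bounded Büchi condition on the lifted play. -/
theorem parity_iff_buchi (π : ℕ → V) :
    π ∈ BndParity c ↔ liftP d c hc π ∈ OmegaB (Fset d c) := by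
  rw [bndParity_iff]
  constructor
  · rintro ⟨N, hN⟩
    exact ⟨(d + 2) * (N + 1) + 1, lemB d c hc π N hN⟩
  · rintro ⟨N, hN⟩
    exact ⟨N + 1, lemA d c hc π N hN⟩

end Parity2

end BndAux

namespace BndAux

open GameDefs

section Prod

variable {V : Type} (d : ℕ) (c : V → ℕ) (hc : ∀ v, c v ≤ d) (A : Arena V)

/-- The product arena of `A` with the memory structure. -/
noncomputable def ProdA : Arena (V × Option (OddC d)) where
  eve := {p | p.1 ∈ A.eve}
  edge := fun p q => A.edge p.1 q.1 ∧ q.2 = upd d c hc p.2 p.1 q.1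
  succ := fun p => ⟨((A.succ p.1).choose, upd d c hc p.2 p.1 (A.succ p.1).choose),
    (A.succ p.1).choose_spec, rfl⟩

theorem liftP_isPlay {π : ℕ → V} (hπ : IsPlay A π) :
    IsPlay (ProdA d c hc A) (liftP d c hc π) :=
  fun k => ⟨hπ k, memRun_succ d c hc π k⟩

theorem play_snd (pp : ℕ → V × Option (OddC d)) (hplay : IsPlay (ProdA d c hc A) pp)
    (h0 : (pp 0).2 = none) :
    ∀ k, (pp k).2 = memRun (MemS d c hc) (fun j => (pp j).1) k := by
  intro k
  induction k with
  | zero => exact h0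
  | succ k ih =>
    have := (hplay k).2
    rw [this, ih]
    rfl

/-- Transfer of winning regions from the original game to the product game. -/
theorem WE_transfer {v : V} (hv : v ∈ WE A (BndParity c)) :
    ((v, none) : V × Option (OddC d)) ∈ WE (ProdA d c hc A) (OmegaB (Fset d c)) := by
  obtain ⟨σ0, hσ0⟩ := hv
  refine ⟨⟨fun h p => (σ0.move (h.map Prod.fst) p.1,
      upd d c hc p.2 p.1 (σ0.move (h.map Prod.fst) p.1)),
    fun h p hp => ⟨σ0.legal (h.map Prod.fst) p.1 hp, rfl⟩⟩, ?_⟩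
  intro pp hplay h0 hcons
  set π : ℕ → V := fun k => (pp k).1 with hπ
  have hsnd := play_snd d c hc A pp hplay (by rw [h0])
  have hppk : ∀ k, pp k = liftP d c hc π k := by
    intro k
    have h1 := hsnd k
    show pp k = (π k, memRun (MemS d c hc) π k)
    rw [← h1]
    exact Prod.mk.eta.symm
  have hppeq : pp = liftP d c hc π := funext hppk
  have hπ0 : π 0 = v := by
    show (pp 0).1 = v
    rw [h0]
  have hπplay : IsPlay A π := fun k => (hplay k).1
  have hπcons : EveConsistent A σ0 π := by
    intro k hk
    have hk' : pp k ∈ (ProdA d c hc A).eve := hk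
    have hmove := hcons k hk'
    have h1 : π (k + 1) = (σ0.move ((hist pp k).map Prod.fst) (π k)) := by
      show (pp (k+1)).1 = _
      rw [hmove]
    rw [h1]
    congr 1
    rw [hist, hist, List.map_map]
    exact List.map_congr_left (fun a _ => rfl)
  have hpar : π ∈ BndParity c := hσ0 π hπplay hπ0 hπcons
  rw [hppeq]
  exact (parity_iff_buchi d c hc π).mp hpar

end Prod

end BndAux


open GameDefs in
/-- in bounded parity games, Eve has a winning strategy from her winning
set using at most `ℓ + 1` memory states, where `ℓ` is the number of odd colors. -/
theorem stmt12 {V : Type} [Countable V] (A : Arena V) (d : ℕ) (c : V → ℕ)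
    (hc : ∀ v, c v ≤ d) :
    ∃ Mem : Memory V, ∃ _ : Finite Mem.M, ∃ σ : EveMemStrategy A Mem,
      Nat.card Mem.M ≤ ((Finset.range (d + 1)).filter (fun m => Odd m)).card + 1 ∧
      ∀ v ∈ WE A (BndParity c), EveMemWinsFrom A Mem σ (BndParity c) v := by
  
  obtain ⟨σ', hσ'⟩ := BndAux.buchi_main (BndAux.ProdA d c hc A) (BndAux.Fset d c)
  refine ⟨BndAux.MemS d c hc, (inferInstance : Finite (Option (BndAux.OddC d))),
    ⟨fun v m => (σ'.move (v, m)).1, fun v m hv => (σ'.legal (v, m) hv).1⟩, ?_, ?_⟩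
  · -- cardinality bound
    have h1 : Nat.card (Option (BndAux.OddC d)) = Fintype.card (Option (BndAux.OddC d)) :=
      Nat.card_eq_fintype_card
    have h2 : Fintype.card (Option (BndAux.OddC d)) = Fintype.card (BndAux.OddC d) + 1 :=
      Fintype.card_option
    have h3 : Fintype.card (BndAux.OddC d) =
        ((Finset.range (d + 1)).filter (fun m => Odd m)).card :=
      Fintype.card_of_subtype _ (fun x => Iff.rfl)
    show Nat.card (Option (BndAux.OddC d)) ≤ _
    omega
  · intro v hv π hplay h0 hcons
    have hWE : ((v, none) : V × Option (BndAux.OddC d)) ∈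
        WE (BndAux.ProdA d c hc A) (BndAux.OmegaB (BndAux.Fset d c)) :=
      BndAux.WE_transfer d c hc A hv
    have hwin := hσ' (v, none) hWE
    have hlift0 : BndAux.liftP d c hc π 0 = (v, none) := by
      show (π 0, none) = (v, none)
      rw [h0]
    have hposcons : PosConsistent (BndAux.ProdA d c hc A) σ' (BndAux.liftP d c hc π) := by
      intro k hk
      have hk' : π k ∈ A.eve := hk
      have hleg := σ'.legal (BndAux.liftP d c hc π k) hk
      have h1 : π (k + 1) = (σ'.move (BndAux.liftP d c hc π k)).1 := hcons k hk'
      have h2 : memRun (BndAux.MemS d c hc) π (k + 1) =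
          (σ'.move (BndAux.liftP d c hc π k)).2 := by
        rw [BndAux.memRun_succ, h1]
        exact hleg.2.symm
      show (π (k + 1), memRun (BndAux.MemS d c hc) π (k + 1)) =
        σ'.move (BndAux.liftP d c hc π k)
      rw [h1, h2]
      exact Prod.mk.eta
    have homega := hwin (BndAux.liftP d c hc π) (BndAux.liftP_isPlay d c hc A hplay)
      hlift0 hposcons
    exact (BndAux.parity_iff_buchi d c hc π).mpr homega
end

section
/- Let A be an arena with coloring c : V → {0,...,d} where d is even, and let M be the memory structure with state set {1,3,...,d−1} ∪ {d}, update function μ(m,(v,v')) = m if c(v') ≥ m, μ(m,(v,v')) = c(v') if c(v') < m and c(v') is odd, μ(m,(v,v')) = d if c(v') < m and c(v') is even, and initial state m_0 = c(v_0) if c(v_0) is odd and m_0 = d otherwise. Put F = {(v,d) : c(v) is even} in the product arena A × M. Then for every play π in A from v_0 and its unique corresponding play π̃ in A × M: π ∈ BndParity(c) if and only if sup_k dist_k(π̃,F) < ∞ (i.e. π̃ satisfies the bounded Büchi condition for F). -/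
open Filter Set

namespace GameDefs

/-- The update function of the memory structure tracking the most important pending
request: `μ(m,(v,v')) = m` if `c(v') ≥ m`, `= c(v')` if `c(v') < m` is odd,
and `= d` if `c(v') < m` is even. -/
def parityUpd {V : Type} (c : V → ℕ) (d : ℕ) : ℕ → V → V → ℕ :=
  fun m _ v' => if m ≤ c v' then m else if Odd (c v') then c v' else d

/-- The memory structure of Proposition `mem_bounded_parity`, with initial state
`c(v₀)` if `c(v₀)` is odd and `d` otherwise. -/
def parityMem {V : Type} (c : V → ℕ) (d : ℕ) (v0 : V) : Memory V where
  M := ℕ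
  m0 := if Odd (c v0) then c v0 else d
  upd := parityUpd c d

end GameDefs

namespace Stmt13Aux
open GameDefs

lemma sInf_image_le_iff {S : Set ℕ} {N : ℕ} :
    sInf ((fun j : ℕ => (j : ℕ∞)) '' S) ≤ (N : ℕ∞) ↔ ∃ j ∈ S, j ≤ N := by
  constructor
  · intro h
    by_contra hcon
    push_neg at hcon
    have hlb : ((N + 1 : ℕ) : ℕ∞) ≤ sInf ((fun j : ℕ => (j : ℕ∞)) '' S) := by
      apply le_sInf
      rintro b ⟨j, hj, rfl⟩
      show ((N+1:ℕ):ℕ∞) ≤ (j:ℕ∞)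
      exact_mod_cast hcon j hj
    have : ((N + 1 : ℕ) : ℕ∞) ≤ (N : ℕ∞) := hlb.trans h
    exact absurd this (by exact_mod_cast Nat.not_succ_le_self N)
  · rintro ⟨j, hj, hjN⟩
    exact le_trans (sInf_le ⟨j, hj, rfl⟩) (by simpa using (Nat.cast_le (α := ℕ∞)).mpr hjN)

lemma iSup_lt_top_iff {f : ℕ → ℕ∞} :
    (⨆ k, f k) < ⊤ ↔ ∃ N : ℕ, ∀ k, f k ≤ (N : ℕ∞) := by
  constructor
  · intro h
    obtain ⟨N, hN⟩ := WithTop.ne_top_iff_exists.mp h.ne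
    exact ⟨N, fun k => (le_iSup f k).trans_eq hN.symm⟩
  · rintro ⟨N, hN⟩
    exact lt_of_le_of_lt (iSup_le hN) (WithTop.coe_lt_top N)

variable {V : Type} (c : V → ℕ) (d : ℕ) (v0 : V) (π : ℕ → V)

/-- abbreviation for the memory run -/
def mr (k : ℕ) : ℕ := memRun (parityMem c d v0) π k

lemma mr_zero : mr c d v0 π 0 = if Odd (c v0) then c v0 else d := rfl

lemma mr_succ (k : ℕ) : mr c d v0 π (k+1) =
    if mr c d v0 π k ≤ c (π (k+1)) then mr c d v0 π k
    else if Odd (c (π (k+1))) then c (π (k+1)) else d := rfl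

variable {c d v0 π}
variable (hc : ∀ v, c v ≤ d) (hd : Even d) (h0 : π 0 = v0)

include hc in
lemma mr_le : ∀ k, mr c d v0 π k ≤ d := by
  intro k
  induction k with
  | zero => rw [mr_zero]; split <;> [exact hc v0; exact le_rfl]
  | succ k ih =>
      rw [mr_succ]
      split
      · exact ih
      · split <;> [exact hc _; exact le_rfl]

lemma mr_odd_or (k : ℕ) : Odd (mr c d v0 π k) ∨ mr c d v0 π k = d := by
  induction k with
  | zero =>
      rw [mr_zero]; split
      · exact Or.inl (by assumption)
      · exact Or.inr rfl
  | succ k ih =>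
      rw [mr_succ]
      split
      · exact ih
      · split
        · exact Or.inl (by assumption)
        · exact Or.inr rfl

include hc hd h0 in
lemma mr_eq_d_even : ∀ k, mr c d v0 π k = d → Even (c (π k)) := by
  intro k hk
  cases k with
  | zero =>
      rw [mr_zero] at hk
      rw [h0]
      split at hk
      · exact absurd (hk ▸ hd) (Nat.not_even_iff_odd.mpr (by assumption))
      · exact Nat.not_odd_iff_even.mp (by assumption)
  | succ k =>
      rw [mr_succ] at hk
      split at hk
      · -- mr k = d and mr k ≤ c (π (k+1)) ≤ d, so c = d
        have h1 : d ≤ c (π (k+1)) := hk ▸ (by assumption)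
        have h2 : c (π (k+1)) = d := le_antisymm (hc _) h1
        exact h2 ▸ hd
      · split at hk
        · exact absurd (hk ▸ hd) (Nat.not_even_iff_odd.mpr (by assumption))
        · exact Nat.not_odd_iff_even.mp (by assumption)

include hc hd h0 in
lemma mr_eq_d_iff (k : ℕ) :
    mr c d v0 π k = d ↔ (mr c d v0 π k = d ∧ Even (c (π k))) :=
  ⟨fun h => ⟨h, mr_eq_d_even hc hd h0 k h⟩, fun h => h.1⟩

include h0 in
lemma mr_le_of_odd : ∀ k, Odd (c (π k)) → mr c d v0 π k ≤ c (π k) := by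
  intro k hodd
  cases k with
  | zero =>
      rw [mr_zero, h0] at *
      rw [if_pos hodd]
  | succ k =>
      rw [mr_succ]
      by_cases h1 : mr c d v0 π k ≤ c (π (k+1))
      · rw [if_pos h1]; exact h1
      · rw [if_neg h1, if_pos hodd]

lemma mr_step (k : ℕ) : mr c d v0 π (k+1) ≤ mr c d v0 π k ∨ mr c d v0 π (k+1) = d := by
  rw [mr_succ]
  split
  · exact Or.inl le_rfl
  · split
    · exact Or.inl (le_of_lt (Nat.lt_of_not_le (by assumption)))
    · exact Or.inr rfl

/-- while memory never hits `d` strictly inside the interval, it is nonincreasing -/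
lemma mr_antitone (k : ℕ) : ∀ j, (∀ r, 0 < r → r ≤ j → mr c d v0 π (k + r) ≠ d) →
    mr c d v0 π (k + j) ≤ mr c d v0 π k := by
  intro j
  induction j with
  | zero => intro _; exact le_rfl
  | succ j ih =>
      intro h
      have h1 : mr c d v0 π (k + j) ≤ mr c d v0 π k :=
        ih (fun r hr hrj => h r hr (hrj.trans (Nat.le_succ j)))
      rcases mr_step (c := c) (d := d) (v0 := v0) (π := π) (k + j) with h2 | h2
      · exact le_trans h2 h1
      · exact absurd h2 (h (j+1) (Nat.succ_pos j) le_rfl)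

include h0 in
/-- set time: if memory is not `d`, there is a time where its value was set -/
lemma mr_set_time : ∀ k, mr c d v0 π k ≠ d →
    ∃ t ≤ k, c (π t) = mr c d v0 π k ∧ ∀ r, t ≤ r → r ≤ k → mr c d v0 π r = mr c d v0 π k := by
  intro k
  induction k with
  | zero =>
      intro hk
      have hodd : Odd (c v0) := by
        by_contra h
        rw [mr_zero, if_neg h] at hk; exact hk rfl
      refine ⟨0, le_rfl, ?_, ?_⟩
      · rw [mr_zero, if_pos hodd, h0]
      · intro r h1 h2
        rw [Nat.le_zero.mp h2]
  | succ k ih =>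
      intro hk
      rw [mr_succ] at hk
      split at hk
      · -- m (k+1) = m k
        have heq : mr c d v0 π (k+1) = mr c d v0 π k := by
          rw [mr_succ, if_pos (by assumption)]
        obtain ⟨t, ht, hct, hall⟩ := ih (heq ▸ hk)
        refine ⟨t, ht.trans (Nat.le_succ k), heq ▸ hct, fun r h1 h2 => ?_⟩
        rcases Nat.lt_or_ge r (k+1) with h3 | h3
        · rw [heq]; exact hall r h1 (Nat.lt_succ_iff.mp h3)
        · have : r = k + 1 := le_antisymm h2 h3
          rw [this]
      · split at hk
        · -- m (k+1) = c (π (k+1))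
          have heq : mr c d v0 π (k+1) = c (π (k+1)) := by
            rw [mr_succ, if_neg (by assumption), if_pos (by assumption)]
          exact ⟨k+1, le_rfl, heq.symm, fun r h1 h2 => by
            rw [le_antisymm h2 h1]⟩
        · exact absurd rfl hk

lemma distB_le_iff {W : Type} {ρ : ℕ → W} {F : Set W} {N k : ℕ} :
    distB ρ F k ≤ (N : ℕ∞) ↔ ∃ j ≤ N, ρ (k + j) ∈ F := by
  rw [GameDefs.distB, sInf_image_le_iff]
  constructor
  · rintro ⟨j, hj, hjN⟩; exact ⟨j, hjN, hj⟩
  · rintro ⟨j, hjN, hj⟩; exact ⟨j, hj, hjN⟩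

lemma distC_le_iff {N k : ℕ} :
    distC π c k ≤ (N : ℕ∞) ↔
      ∃ j ≤ N, Even (c (π (k + j))) ∧ c (π (k + j)) ≤ c (π k) := by
  rw [GameDefs.distC, sInf_image_le_iff]
  constructor
  · rintro ⟨j, hj, hjN⟩; exact ⟨j, hjN, hj⟩
  · rintro ⟨j, hjN, hj⟩; exact ⟨j, hj, hjN⟩

include h0 in
lemma claimA {N : ℕ}
    (hP : ∀ k, ∃ j ≤ N, Even (c (π (k + j))) ∧ c (π (k + j)) ≤ c (π k)) :
    ∀ k, mr c d v0 π k ≠ d →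
      ∃ j, 1 ≤ j ∧ j ≤ N ∧
        (mr c d v0 π (k + j) = d ∨ mr c d v0 π (k + j) < mr c d v0 π k) := by
  intro k hk
  obtain ⟨t, htk, hct, hall⟩ := mr_set_time h0 k hk
  have hmodd : Odd (mr c d v0 π k) := (mr_odd_or k).resolve_right hk
  obtain ⟨j', hj'N, hev, hle⟩ := hP t
  rw [hct] at hle
  have hj'1 : 1 ≤ j' := by
    rcases Nat.eq_zero_or_pos j' with h | h
    · exfalso
      rw [h, Nat.add_zero, hct] at hev
      exact (Nat.not_even_iff_odd.mpr hmodd) hev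
    · exact h
  have hlt : c (π (t + j')) < mr c d v0 π k := by
    rcases Nat.lt_or_ge (c (π (t + j'))) (mr c d v0 π k) with h | h
    · exact h
    · exfalso
      have heq : c (π (t + j')) = mr c d v0 π k := le_antisymm hle h
      rw [heq] at hev
      exact (Nat.not_even_iff_odd.mpr hmodd) hev
  have hks : k < t + j' := by
    by_contra hcon
    push_neg at hcon
    have h1 : mr c d v0 π (t + j') = mr c d v0 π k :=
      hall _ (Nat.le_add_right t j') hcon
    have h2 : mr c d v0 π (t + j' - 1) = mr c d v0 π k :=
      hall _ (by omega) (by omega)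
    have hupd := mr_succ c d v0 π (t + j' - 1)
    rw [show t + j' - 1 + 1 = t + j' from by omega, h2] at hupd
    rw [if_neg (by omega), if_neg (Nat.not_odd_iff_even.mpr hev)] at hupd
    rw [h1] at hupd
    exact hk hupd
  by_cases hmid : ∃ r, k < r ∧ r ≤ t + j' ∧ mr c d v0 π r = d
  · obtain ⟨r, hr1, hr2, hr3⟩ := hmid
    refine ⟨r - k, by omega, by omega, Or.inl ?_⟩
    rw [show k + (r - k) = r from by omega]
    exact hr3
  · push_neg at hmid
    refine ⟨t + j' - k, by omega, by omega, Or.inr ?_⟩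
    rw [show k + (t + j' - k) = t + j' from by omega]
    have hsne : mr c d v0 π (t + j') ≠ d := hmid _ hks le_rfl
    have hupd := mr_succ c d v0 π (t + j' - 1)
    rw [show t + j' - 1 + 1 = t + j' from by omega] at hupd
    by_cases hb : mr c d v0 π (t + j' - 1) ≤ c (π (t + j'))
    · rw [if_pos hb] at hupd
      -- mr (t+j') = mr (t+j'-1) ≤ c (π (t+j')) < mr k
      omega
    · rw [if_neg hb, if_neg (Nat.not_odd_iff_even.mpr hev)] at hupd
      exact absurd hupd hsne

include h0 in
lemma claimB {N : ℕ}
    (hP : ∀ k, ∃ j ≤ N, Even (c (π (k + j))) ∧ c (π (k + j)) ≤ c (π k)) :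
    ∀ v k, mr c d v0 π k ≤ v → ∃ j ≤ v * N, mr c d v0 π (k + j) = d := by
  intro v
  induction v with
  | zero =>
      intro k hk
      refine ⟨0, Nat.zero_le _, ?_⟩
      rcases mr_odd_or (c := c) (d := d) (v0 := v0) (π := π) k with h | h
      · exfalso
        have : mr c d v0 π k = 0 := Nat.le_zero.mp hk
        rw [this] at h
        exact (Nat.not_odd_iff_even.mpr (Even.zero)) h
      · exact h
  | succ v ih =>
      intro k hk
      by_cases hkd : mr c d v0 π k = d
      · exact ⟨0, Nat.zero_le _, hkd⟩
      · obtain ⟨j1, hj11, hj1N, hcase⟩ := claimA h0 hP k hkd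
        rcases hcase with h | h
        · exact ⟨j1, by rw [Nat.succ_mul]; omega, h⟩
        · obtain ⟨j2, hj2, hd2⟩ := ih (k + j1) (by omega)
          refine ⟨j1 + j2, by rw [Nat.succ_mul]; omega, ?_⟩
          rw [← Nat.add_assoc]
          exact hd2

end Stmt13Aux


open GameDefs in
/-- a play satisfies the bounded parity condition iff its lift to the
product with the request-tracking memory structure satisfies the bounded Büchi
condition for `F = {(v,d) : c(v) even}`. -/
theorem stmt13 {V : Type} [Countable V] (A : Arena V) (d : ℕ) (hd : Even d)
    (c : V → ℕ) (hc : ∀ v, c v ≤ d) (v0 : V)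
    (π : ℕ → V) (hplay : IsPlay A π) (h0 : π 0 = v0) :
    (π ∈ BndParity c ↔
      (⨆ k, distB (fun k => ((π k, memRun (parityMem c d v0) π k) : V × ℕ))
          {p : V × ℕ | p.2 = d ∧ Even (c p.1)} k) < ⊤) := by
  classical
  simp only [BndParity, Set.mem_setOf_eq]
  rw [Stmt13Aux.iSup_lt_top_iff, Stmt13Aux.iSup_lt_top_iff]
  constructor
  · rintro ⟨N, hN⟩
    have hP : ∀ k, ∃ j ≤ N, Even (c (π (k + j))) ∧ c (π (k + j)) ≤ c (π k) :=
      fun k => Stmt13Aux.distC_le_iff.mp (hN k)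
    refine ⟨d * N, fun k => ?_⟩
    obtain ⟨j, hj, hjd⟩ :=
      Stmt13Aux.claimB (c := c) (d := d) (v0 := v0) (π := π) h0 hP d k
        (Stmt13Aux.mr_le hc k)
    exact Stmt13Aux.distB_le_iff.mpr
      ⟨j, hj, hjd, Stmt13Aux.mr_eq_d_even hc hd h0 _ hjd⟩
  · rintro ⟨N, hN⟩
    refine ⟨N, fun k => Stmt13Aux.distC_le_iff.mpr ?_⟩
    by_cases hev : Even (c (π k))
    · exact ⟨0, Nat.zero_le N, hev, le_rfl⟩
    · have hodd : Odd (c (π k)) := Nat.not_even_iff_odd.mp hev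
      obtain ⟨j0, hj0N, hj0⟩ := Stmt13Aux.distB_le_iff.mp (hN k)
      have hex : ∃ j, Stmt13Aux.mr c d v0 π (k + j) = d := ⟨j0, hj0.1⟩
      set j := Nat.find hex with hjdef
      have hjd : Stmt13Aux.mr c d v0 π (k + j) = d := Nat.find_spec hex
      have hjN : j ≤ N := (Nat.find_min' hex hj0.1).trans hj0N
      have hmk : Stmt13Aux.mr c d v0 π k ≤ c (π k) := Stmt13Aux.mr_le_of_odd h0 k hodd
      have hmklt : Stmt13Aux.mr c d v0 π k < d := by
        have hcd : c (π k) < d := by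
          rcases Nat.lt_or_ge (c (π k)) d with h | h
          · exact h
          · exact absurd (le_antisymm (hc _) h ▸ hd) hev
        omega
      have hj1 : 1 ≤ j := by
        rcases Nat.eq_zero_or_pos j with h | h
        · exfalso; rw [h, Nat.add_zero] at hjd; omega
        · exact h
      have hmono : Stmt13Aux.mr c d v0 π (k + (j - 1)) ≤ Stmt13Aux.mr c d v0 π k :=
        Stmt13Aux.mr_antitone k (j - 1)
          (fun r hr hrj => Nat.find_min hex (show r < j by omega))
      have hupd := Stmt13Aux.mr_succ c d v0 π (k + (j - 1))
      rw [show k + (j - 1) + 1 = k + j from by omega, hjd] at hupd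
      by_cases hb : Stmt13Aux.mr c d v0 π (k + (j - 1)) ≤ c (π (k + j))
      · rw [if_pos hb] at hupd
        exact absurd hupd.symm (Nat.find_min hex (show j - 1 < j by omega))
      · rw [if_neg hb] at hupd
        by_cases hob : Odd (c (π (k + j)))
        · rw [if_pos hob] at hupd
          exact absurd (hupd ▸ hd) (Nat.not_even_iff_odd.mpr hob)
        · exact ⟨j, hjN, Nat.not_odd_iff_even.mp hob, by omega⟩
end

section
/- There exists an arena A over a countable vertex set with a coloring function c : V → {0,1,2,3} and a vertex v_0 such that Eve has a winning strategy from v_0 for the bounded parity condition BndParity(c) using 2 memory states, but Eve has no positional winning strategy from v_0 for BndParity(c). -/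
open Filter Set

namespace Stmt14Aux
open GameDefs

inductive Vx : Type
  | v0 | e | y | d (i : ℕ) | u (i : ℕ)
  deriving DecidableEq

def Ed : Vx → Vx → Prop
  | .v0, w => w = .e
  | .e, w => w = .d 0 ∨ w = .y
  | .y, w => w = .e
  | .d i, w => w = .d (i+1) ∨ w = .u i
  | .u 0, w => w = .e
  | .u (j+1), w => w = .u j

def col : Vx → ℕ
  | .v0 => 1
  | .e => 2
  | .y => 2
  | .d _ => 0
  | .u 0 => 0
  | .u (_+1) => 1

def Ar : Arena Vx where
  eve := {Vx.e}
  edge := Ed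
  succ v := by
    cases v with
    | v0 => exact ⟨.e, rfl⟩
    | e => exact ⟨.y, Or.inr rfl⟩
    | y => exact ⟨.e, rfl⟩
    | d i => exact ⟨.u i, Or.inr rfl⟩
    | u j =>
      cases j with
      | zero => exact ⟨.e, rfl⟩
      | succ j => exact ⟨.u j, rfl⟩

instance : Countable Vx := by
  have hinj : Function.Injective (fun v : Vx =>
      (match v with
        | .v0 => 0
        | .e => 1
        | .y => 2
        | .d i => 2 * i + 3
        | .u i => 2 * i + 4 : ℕ)) := by
    intro a b h
    cases a <;> cases b <;> simp_all <;> omega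
  exact hinj.countable

lemma col_le_three : ∀ v, col v ≤ 3 := by
  intro v
  rcases v with _ | _ | _ | i | j
  · simp [col]
  · simp [col]
  · simp [col]
  · simp [col]
  · cases j <;> simp [col]

lemma distC_le {π : ℕ → Vx} {k j : ℕ}
    (h1 : Even (col (π (k + j)))) (h2 : col (π (k + j)) ≤ col (π k)) :
    distC π col k ≤ (j : ℕ∞) :=
  sInf_le ⟨j, ⟨h1, h2⟩, rfl⟩

lemma le_distC {π : ℕ → Vx} {k n : ℕ}
    (h : ∀ j, Even (col (π (k + j))) → col (π (k + j)) ≤ col (π k) → n ≤ j) :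
    (n : ℕ∞) ≤ distC π col k := by
  apply le_sInf
  rintro b ⟨j, ⟨h1, h2⟩, rfl⟩
  show (n : ℕ∞) ≤ (j : ℕ∞)
  exact_mod_cast h j h1 h2

/-- Eve's memory: a flag that is set once the play has visited `e`. -/
def Mm : Memory Vx where
  M := Bool
  m0 := false
  upd := fun m a _ => m || decide (a = Vx.e)

def σE : EveMemStrategy Ar Mm where
  move := fun _ m => cond m Vx.y (Vx.d 0)
  legal := by
    intro v m hv
    have hv' : v = Vx.e := hv
    subst hv'
    cases m
    · exact Or.inl rfl
    · exact Or.inr rfl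

theorem win : EveMemWinsFrom Ar Mm σE (BndParity col) Vx.v0 := by
  intro π hplay h0 hcons
  have hπ1 : π 1 = Vx.e := by have h := hplay 0; rw [h0] at h; exact h
  have hm1 : memRun Mm π 1 = false := by
    show Mm.upd (memRun Mm π 0) (π 0) (π 1) = false
    rw [h0]
    rfl
  have hπ2 : π 2 = Vx.d 0 := by
    have h := hcons 1 hπ1
    rw [hπ1, hm1] at h
    exact h
  have hmT : ∀ k, 2 ≤ k → memRun Mm π k = true := by
    intro k hk
    induction k with
    | zero => omega
    | succ k ih =>
      show (memRun Mm π k || decide (π k = Vx.e)) = true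
      rcases Nat.lt_or_ge k 2 with h2 | h2
      · have hk1 : k = 1 := by omega
        subst hk1
        rw [hπ1]
        rw [hm1]; decide
      · rw [ih h2]; simp
  have hEve : ∀ k, 2 ≤ k → π k = Vx.e → π (k+1) = Vx.y := by
    intro k hk he
    have h := hcons k he
    rw [hmT k hk] at h
    rw [h, he]
    rfl
  have hNotV0 : ∀ k, π (k+1) ≠ Vx.v0 := by
    intro k h
    have h2 := hplay k
    rw [h] at h2
    rcases hv : π k with _ | _ | _ | i | j <;> rw [hv] at h2
    · simp [Ar, Ed] at h2
    · simp [Ar, Ed] at h2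
    · simp [Ar, Ed] at h2
    · simp [Ar, Ed] at h2
    · cases j <;> simp [Ar, Ed] at h2
  have hUdesc : ∀ t j k, π k = Vx.u j → t ≤ j → π (k + t) = Vx.u (j - t) := by
    intro t
    induction t with
    | zero => intro j k hk _; simpa using hk
    | succ t ih =>
      intro j k hk ht
      have h1 : π (k + t) = Vx.u (j - t) := ih j k hk (by omega)
      obtain ⟨s, hs⟩ : ∃ s, j - t = s + 1 := ⟨j - (t+1), by omega⟩
      have h2 := hplay (k + t)
      rw [h1, hs] at h2
      have h3 : π (k + t + 1) = Vx.u s := h2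
      rw [show k + (t+1) = k + t + 1 by ring, h3, show s = j - (t+1) by omega]
  have hIdx : ∀ k, (∀ j, π k = Vx.u j → j ≤ k) ∧ (∀ i, π k = Vx.d i → i ≤ k) := by
    intro k
    induction k with
    | zero =>
      constructor <;> intro j h <;> rw [h0] at h <;> exact absurd h (by simp)
    | succ k ih =>
      have hp := hplay k
      constructor
      · intro j h
        rw [h] at hp
        rcases hv : π k with _ | _ | _ | i | m <;> rw [hv] at hp
        · simp [Ar, Ed] at hp
        · simp [Ar, Ed] at hp
        · simp [Ar, Ed] at hp
        · have hp' : Vx.u j = Vx.d (i+1) ∨ Vx.u j = Vx.u i := hp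
          rcases hp' with hp' | hp'
          · exact absurd hp' (by simp)
          · have hji : j = i := by simpa using hp'
            have := ih.2 i hv
            omega
        · cases m with
          | zero => simp [Ar, Ed] at hp
          | succ m =>
            have hji : j = m := by simpa [Ar, Ed] using hp
            have := ih.1 (m+1) hv
            omega
      · intro i h
        rw [h] at hp
        rcases hv : π k with _ | _ | _ | i' | m <;> rw [hv] at hp
        · simp [Ar, Ed] at hp
        · have hp' : Vx.d i = Vx.d 0 ∨ Vx.d i = Vx.y := hp
          rcases hp' with hp' | hp'
          · have : i = 0 := by simpa using hp'
            omega
          · exact absurd hp' (by simp)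
        · simp [Ar, Ed] at hp
        · have hp' : Vx.d i = Vx.d (i'+1) ∨ Vx.d i = Vx.u i' := hp
          rcases hp' with hp' | hp'
          · have : i = i' + 1 := by simpa using hp'
            have := ih.2 i' hv
            omega
          · exact absurd hp' (by simp)
        · cases m with
          | zero => simp [Ar, Ed] at hp
          | succ m => simp [Ar, Ed] at hp
  have hTail : ∀ k, 2 ≤ k → π k = Vx.e → ∀ m, π (k + m) = Vx.e ∨ π (k + m) = Vx.y := by
    intro k hk he m
    induction m with
    | zero => left; simpa using he
    | succ m ih =>
      rcases ih with h | h
      · right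
        have h2 := hEve (k+m) (by omega) h
        rw [show k + (m+1) = k + m + 1 by ring, h2]
      · left
        have h2 := hplay (k+m)
        rw [h] at h2
        have h3 : π (k+m+1) = Vx.e := h2
        rw [show k + (m+1) = k + m + 1 by ring, h3]
  have heven : ∀ k, Even (col (π k)) → distC π col k ≤ ((0:ℕ) : ℕ∞) :=
    fun k h => distC_le (j := 0) (by simpa using h) (by simp)
  have hv0case : distC π col 0 ≤ ((2:ℕ) : ℕ∞) := by
    refine distC_le (j := 2) ?_ ?_
    · rw [show (0:ℕ)+2 = 2 from rfl, hπ2]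
      simp [col]
    · rw [show (0:ℕ)+2 = 2 from rfl, hπ2, h0]
      simp [col]
  show (⨆ k, distC π col k) < ⊤
  by_cases hu : ∃ k j, π k = Vx.u j
  · obtain ⟨k0, j0, hk0⟩ := hu
    have hk02 : 2 ≤ k0 := by
      rcases k0 with _ | _ | k0
      · rw [h0] at hk0; exact absurd hk0 (by simp)
      · rw [hπ1] at hk0; exact absurd hk0 (by simp)
      · omega
    have hu0 : π (k0 + j0) = Vx.u 0 := by simpa using hUdesc j0 j0 k0 hk0 le_rfl
    have hTe : π (k0 + j0 + 1) = Vx.e := by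
      have h2 := hplay (k0 + j0)
      rw [hu0] at h2
      exact h2
    have hbound : ∀ k, distC π col k ≤ ((k0 + j0 + 3 : ℕ) : ℕ∞) := by
      intro k
      rcases hv : π k with _ | _ | _ | i | m
      · have hk' : k = 0 := by
          cases k with
          | zero => rfl
          | succ k => exact absurd hv (hNotV0 k)
        subst hk'
        exact le_trans hv0case (by exact_mod_cast by omega)
      · exact le_trans (heven k (by rw [hv]; simp [col])) (by exact_mod_cast by omega)
      · exact le_trans (heven k (by rw [hv]; simp [col])) (by exact_mod_cast by omega)
      · exact le_trans (heven k (by rw [hv]; simp [col])) (by exact_mod_cast by omega)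
      · cases m with
        | zero => exact le_trans (heven k (by rw [hv]; simp [col])) (by exact_mod_cast by omega)
        | succ s =>
          have hkT : k < k0 + j0 + 1 := by
            by_contra hge
            push_neg at hge
            obtain ⟨m', hm'⟩ := Nat.exists_eq_add_of_le hge
            rcases hTail (k0+j0+1) (by omega) hTe m' with h | h <;>
              rw [← hm', hv] at h <;> exact absurd h (by simp)
          have hsk : s + 1 ≤ k := (hIdx k).1 _ hv
          have hans : π (k + (s+1)) = Vx.u 0 := by
            simpa using hUdesc (s+1) (s+1) k hv le_rfl
          refine le_trans (distC_le (j := s+1) ?_ ?_) ?_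
          · rw [hans]; simp [col]
          · rw [hans, hv]; simp [col]
          · exact_mod_cast by omega
    exact lt_of_le_of_lt (iSup_le hbound) (ENat.coe_lt_top _)
  · push_neg at hu
    have hbound : ∀ k, distC π col k ≤ ((2:ℕ) : ℕ∞) := by
      intro k
      rcases hv : π k with _ | _ | _ | i | m
      · have hk' : k = 0 := by
          cases k with
          | zero => rfl
          | succ k => exact absurd hv (hNotV0 k)
        subst hk'
        exact hv0case
      · exact le_trans (heven k (by rw [hv]; simp [col])) (by exact_mod_cast by omega)
      · exact le_trans (heven k (by rw [hv]; simp [col])) (by exact_mod_cast by omega)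
      · exact le_trans (heven k (by rw [hv]; simp [col])) (by exact_mod_cast by omega)
      · exact absurd hv (hu k m)
    exact lt_of_le_of_lt (iSup_le hbound) (ENat.coe_lt_top _)

/-- The play against a positional strategy that always plays `y` at `e`. -/
def piY : ℕ → Vx
  | 0 => Vx.v0
  | k+1 => if k % 2 = 0 then Vx.e else Vx.y

/-- State machine generating the play against a positional strategy that always
plays `d 0` at `e`: Adam descends one step deeper each round. -/
def stepF : Vx × ℕ → Vx × ℕ
  | (Vx.v0, n) => (Vx.e, n)
  | (Vx.e, n) => (Vx.d 0, n+1)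
  | (Vx.y, n) => (Vx.e, n)
  | (Vx.d i, n) => if i < n then (Vx.d (i+1), n) else (Vx.u i, n)
  | (Vx.u 0, n) => (Vx.e, n)
  | (Vx.u (j+1), n) => (Vx.u j, n)

def sq (k : ℕ) : Vx × ℕ := stepF^[k] (Vx.v0, 0)

def piD (k : ℕ) : Vx := (sq k).1

lemma sq_succ (k : ℕ) : sq (k+1) = stepF (sq k) :=
  Function.iterate_succ_apply' _ _ _

lemma climb : ∀ t i n k, sq k = (Vx.d i, n) → n = i + t → sq (k + t + 1) = (Vx.u n, n) := by
  intro t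
  induction t with
  | zero =>
    intro i n k h hn
    have hn' : i = n := by omega
    subst hn'
    rw [sq_succ, h]
    simp [stepF]
  | succ t ih =>
    intro i n k h hn
    have h1 : sq (k+1) = (Vx.d (i+1), n) := by
      rw [sq_succ, h]
      simp [stepF, show i < n by omega]
    have h2 := ih (i+1) n (k+1) h1 (by omega)
    rw [show k + (t+1) + 1 = k + 1 + t + 1 by ring]
    exact h2
lemma desc : ∀ t j n k, sq k = (Vx.u j, n) → t ≤ j → sq (k + t) = (Vx.u (j - t), n) := by
  intro t
  induction t with
  | zero => intro j n k h _; simpa using h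
  | succ t ih =>
    intro j n k h ht
    have h1 : sq (k + t) = (Vx.u (j - t), n) := ih j n k h (by omega)
    obtain ⟨s, hs⟩ : ∃ s, j - t = s + 1 := ⟨j - (t+1), by omega⟩
    rw [hs] at h1
    have h2 : sq (k + t + 1) = (Vx.u s, n) := by
      rw [sq_succ, h1]
      rfl
    rw [show k + (t+1) = k + t + 1 by ring, h2, show s = j - (t+1) by omega]

lemma toE : ∀ n, ∃ k, sq k = (Vx.e, n) := by
  intro n
  induction n with
  | zero => exact ⟨1, rfl⟩
  | succ n ih =>
    obtain ⟨k, hk⟩ := ih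
    have h1 : sq (k+1) = (Vx.d 0, n+1) := by
      rw [sq_succ, hk]
      rfl
    have h2 : sq ((k+1) + (n+1) + 1) = (Vx.u (n+1), n+1) := climb (n+1) 0 (n+1) (k+1) h1 (by omega)
    have h3 : sq ((k+1) + (n+1) + 1 + (n+1)) = (Vx.u 0, n+1) := by
      simpa using desc (n+1) (n+1) (n+1) _ h2 le_rfl
    refine ⟨(k+1) + (n+1) + 1 + (n+1) + 1, ?_⟩
    rw [sq_succ, h3]
    rfl

lemma toU : ∀ n, ∃ k, sq k = (Vx.u (n+1), n+1) := by
  intro n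
  obtain ⟨k, hk⟩ := toE n
  have h1 : sq (k+1) = (Vx.d 0, n+1) := by
    rw [sq_succ, hk]
    rfl
  exact ⟨(k+1) + (n+1) + 1, climb (n+1) 0 (n+1) (k+1) h1 (by omega)⟩

theorem lose : ¬ ∃ σ : PosStrategy Ar, PosWinsFrom Ar σ (BndParity col) Vx.v0 := by
  rintro ⟨σ, hσ⟩
  have hmv : σ.move Vx.e = Vx.d 0 ∨ σ.move Vx.e = Vx.y := σ.legal Vx.e rfl
  rcases hmv with hd | hy
  · -- σ plays `d 0` at `e`: Adam makes the painful exits deeper and deeper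
    have hplay : IsPlay Ar piD := by
      intro k
      show Ed (sq k).1 (sq (k+1)).1
      rw [sq_succ]
      rcases hsq : sq k with ⟨v, n⟩
      rcases v with _ | _ | _ | i | m
      · exact rfl
      · exact Or.inl rfl
      · exact rfl
      · by_cases hin : i < n
        · simp only [stepF, if_pos hin]
          exact Or.inl rfl
        · simp only [stepF, if_neg hin]
          exact Or.inr rfl
      · cases m with
        | zero => exact rfl
        | succ m => exact rfl
    have hcons : PosConsistent Ar σ piD := by
      intro k hke
      have hke' : (sq k).1 = Vx.e := hke
      rcases hsq : sq k with ⟨v, n⟩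
      rw [hsq] at hke'
      simp only at hke'
      subst hke'
      show (sq (k+1)).1 = σ.move (piD k)
      rw [sq_succ, hsq]
      show Vx.d 0 = σ.move (piD k)
      rw [show piD k = Vx.e from by rw [piD, hsq]]
      exact hd.symm
    have hwin := hσ piD hplay rfl hcons
    have hwin' : (⨆ k, distC piD col k) < ⊤ := hwin
    have hlb : ∀ n : ℕ, (n : ℕ∞) ≤ ⨆ k, distC piD col k := by
      intro n
      obtain ⟨k, hk⟩ := toU n
      have hπk : piD k = Vx.u (n+1) := by rw [piD, hk]
      refine le_trans (le_distC ?_) (le_iSup _ k)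
      intro j hje hjl
      by_contra hlt
      push_neg at hlt
      have hj1 : j ≤ n + 1 := by omega
      have h1 : sq (k + j) = (Vx.u (n + 1 - j), n+1) := desc j (n+1) (n+1) k hk hj1
      have h2 : piD (k + j) = Vx.u (n + 1 - j) := by rw [piD, h1]
      obtain ⟨s, hs⟩ : ∃ s, n + 1 - j = s + 1 := ⟨n - j, by omega⟩
      rw [h2, hs] at hje
      simp [col] at hje
    have hm : ((⨆ k, distC piD col k).toNat : ℕ∞) = ⨆ k, distC piD col k :=
      ENat.coe_toNat hwin'.ne
    have h2 := hlb ((⨆ k, distC piD col k).toNat + 1)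
    rw [← hm] at h2
    have h3 : (⨆ k, distC piD col k).toNat + 1 ≤ (⨆ k, distC piD col k).toNat := by
      exact_mod_cast h2
    omega
  · -- σ plays `y` at `e`: the initial request is never answered
    have hplay : IsPlay Ar piY := by
      intro k
      cases k with
      | zero => exact rfl
      | succ k =>
        by_cases h : k % 2 = 0
        · have h2 : (k+1) % 2 = 1 := by omega
          simp only [piY, if_pos h, h2]
          exact Or.inr rfl
        · have h2 : (k+1) % 2 = 0 := by omega
          simp only [piY, if_neg h, if_pos h2]
          exact rfl
    have hcons : PosConsistent Ar σ piY := by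
      intro k hke
      have hke' : piY k = Vx.e := hke
      cases k with
      | zero => exact absurd hke' (by simp [piY])
      | succ k =>
        by_cases h : k % 2 = 0
        · have h2 : (k+1) % 2 = 1 := by omega
          have h3 : piY (k+1+1) = Vx.y := by simp [piY, h2]
          have h4 : piY (k+1) = Vx.e := by simp [piY, h]
          rw [h3, h4, hy]
        · exact absurd hke' (by simp [piY, h])
    have hwin := hσ piY hplay rfl hcons
    have hwin' : (⨆ k, distC piY col k) < ⊤ := hwin
    have htop : distC piY col 0 = ⊤ := by
      rw [distC]
      refine Eq.trans (congrArg (sInf : Set ℕ∞ → ℕ∞) (?_ : _ = (∅ : Set ℕ∞))) sInf_empty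
      rw [Set.image_eq_empty]
      ext j
      simp only [Set.mem_setOf_eq, Set.mem_empty_iff_false, iff_false, not_and]
      intro hje
      show ¬ col (piY (0 + j)) ≤ col (piY 0)
      cases j with
      | zero => exact absurd hje (by simp [piY, col])
      | succ j =>
        have : piY (0 + (j+1)) = Vx.e ∨ piY (0 + (j+1)) = Vx.y := by
          by_cases h : j % 2 = 0 <;> simp [piY, h]
        rcases this with h | h <;> rw [h] <;> simp [piY, col]
    have : (⊤ : ℕ∞) ≤ ⨆ k, distC piY col k := htop ▸ le_iSup _ 0
    exact absurd hwin' (by rw [top_le_iff.mp this]; exact lt_irrefl ⊤)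

end Stmt14Aux

open GameDefs in
/-- there is a countable arena with colors in `{0,1,2,3}` where Eve wins
the bounded parity condition with 2 memory states but has no positional winning
strategy. -/
theorem stmt14 :
    ∃ V : Type, ∃ _ : Countable V, ∃ A : Arena V, ∃ c : V → ℕ, ∃ _ : ∀ v, c v ≤ 3,
      ∃ v0 : V,
      (∃ Mem : Memory V, ∃ σ : EveMemStrategy A Mem,
        Nat.card Mem.M = 2 ∧ EveMemWinsFrom A Mem σ (BndParity c) v0) ∧
      ¬ ∃ σ : PosStrategy A, PosWinsFrom A σ (BndParity c) v0 := by
  refine ⟨Stmt14Aux.Vx, inferInstance, Stmt14Aux.Ar, Stmt14Aux.col, Stmt14Aux.col_le_three,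
    Stmt14Aux.Vx.v0, ⟨Stmt14Aux.Mm, Stmt14Aux.σE, ?_, Stmt14Aux.win⟩, Stmt14Aux.lose⟩
  show Nat.card Bool = 2
  simp [Nat.card_eq_fintype_card]
end
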